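/- arXiv:1103.5188 — 10 statements merged into one kernel-verified Lean document; each statement's English description precedes it below -/
import Mathlib

section
/- Let u ≥ 1 and v ≥ 2 be natural numbers, let X = (Fin u → Fin v) be the set of databases, let Z be a nonempty finite set, and let ε ≥ 0. If a channel matrix M from X to Z provides ε-differential privacy, then for every prior probability distribution p on X, the min-entropy leakage satisfies I∞(p, M) ≤ u · log₂( v·e^ε / (v − 1 + e^ε) ). -/
open Finset

/-- Chained differential privacy bound along Hamming distance. -/
lemma dp_chain_aux {u v : ℕ} {Z : Type} {ε : ℝ}
    {M : (Fin u → Fin v) → Z → ℝ} (hM0 : ∀ x z, 0 ≤ M x z)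
    (hDP : ∀ x x' : Fin u → Fin v, hammingDist x x' = 1 →
      ∀ z, M x z ≤ Real.exp ε * M x' z) :
    ∀ (n : ℕ) (x x' : Fin u → Fin v), hammingDist x x' = n → ∀ z,
      M x z ≤ Real.exp (ε * n) * M x' z := by
  intro n
  induction n with
  | zero =>
    intro x x' h z
    rw [hammingDist_eq_zero] at h
    subst h
    simp
  | succ n ih =>
    intro x x' h z
    have hne : x ≠ x' := by
      intro he; subst he; simp [hammingDist_self] at h
    obtain ⟨i, hi⟩ : ∃ i, x i ≠ x' i := Function.ne_iff.mp hne
    set y := Function.update x i (x' i) with hy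
    have hmem : i ∈ ({j | x j ≠ x' j} : Finset (Fin u)) := by
      simp [hi]
    have h1 : hammingDist x y = 1 := by
      have : ({j | x j ≠ y j} : Finset (Fin u)) = {i} := by
        ext j
        by_cases hj : j = i
        · subst hj; simp [hy, Function.update_self, hi]
        · simp [hy, Function.update_of_ne hj, hj]
      simp [hammingDist, this]
    have h2 : hammingDist y x' = n := by
      have : ({j | y j ≠ x' j} : Finset (Fin u))
          = ({j | x j ≠ x' j} : Finset (Fin u)).erase i := by
        ext j
        by_cases hj : j = i
        · subst hj; simp [hy, Function.update_self]
        · simp [hy, Function.update_of_ne hj, hj]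
      have hcard : ({j | x j ≠ x' j} : Finset (Fin u)).card = n + 1 := h
      simp only [hammingDist, this, Finset.card_erase_of_mem hmem, hcard,
        Nat.add_sub_cancel]
    calc M x z ≤ Real.exp ε * M y z := hDP x y h1 z
      _ ≤ Real.exp ε * (Real.exp (ε * n) * M x' z) := by
          exact mul_le_mul_of_nonneg_left (ih y x' h2 z) (Real.exp_nonneg ε)
      _ = Real.exp (ε * ((n : ℕ) + 1 : ℕ)) * M x' z := by
          rw [← mul_assoc, ← Real.exp_add]; push_cast; ring_nf
  
/-- Sum of `t ^ hammingDist c x` over all `x`. -/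
lemma sum_pow_hamming {u v : ℕ} (t : ℝ) (c : Fin u → Fin v) :
    ∑ x : Fin u → Fin v, t ^ hammingDist c x = (1 + ((v : ℝ) - 1) * t) ^ u := by
  have key : ∀ x : Fin u → Fin v,
      t ^ hammingDist c x = ∏ i, (if c i = x i then (1 : ℝ) else t) := by
    intro x
    rw [Finset.prod_ite, Finset.prod_const, Finset.prod_const, one_pow, one_mul]
    congr 1
  simp_rw [key]
  rw [← Fintype.prod_sum (fun (_ : Fin u) (a : Fin v) => if c _ = a then (1:ℝ) else t)]
  have inner : ∀ i : Fin u,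
      (∑ a : Fin v, if c i = a then (1 : ℝ) else t) = 1 + ((v : ℝ) - 1) * t := by
    intro i
    have step : ∀ a : Fin v, (if c i = a then (1 : ℝ) else t)
        = t + (if c i = a then (1 - t : ℝ) else 0) := by
      intro a; split <;> ring
    simp_rw [step]
    rw [Finset.sum_add_distrib, Finset.sum_const, Finset.sum_ite_eq]
    simp [Fintype.card_fin]
    ring
  rw [Finset.prod_congr rfl (fun i _ => inner i), Finset.prod_const, Finset.card_univ,
    Fintype.card_fin]

/-- **Theorem 1 (leakage bound).** If a channel `M` from databases
`X = (Fin u → Fin v)` to `Z` provides `ε`-differential privacy, then for every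
prior `p` on `X` the min-entropy leakage is at most
`u * log₂ (v * e^ε / (v - 1 + e^ε))`. -/
theorem dp_bounds_min_entropy_leakage
    (u v : ℕ) (hu : 1 ≤ u) (hv : 2 ≤ v)
    (Z : Type) [Fintype Z] [Nonempty Z]
    (ε : ℝ) (hε : 0 ≤ ε)
    (M : (Fin u → Fin v) → Z → ℝ)
    (hM0 : ∀ x z, 0 ≤ M x z)
    (hM1 : ∀ x, ∑ z, M x z = 1)
    (hDP : ∀ x x' : Fin u → Fin v, hammingDist x x' = 1 →
      ∀ z, M x z ≤ Real.exp ε * M x' z)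
    (p : (Fin u → Fin v) → ℝ)
    (hp0 : ∀ x, 0 ≤ p x) (hp1 : ∑ x, p x = 1) :
    Real.logb 2 ((∑ z, ⨆ x, p x * M x z) / (⨆ x, p x))
      ≤ u * Real.logb 2 (v * Real.exp ε / (v - 1 + Real.exp ε)) := by
  haveI : Nonempty (Fin v) := ⟨⟨0, by omega⟩⟩
  haveI : Nonempty (Fin u → Fin v) := inferInstance
  set t : ℝ := Real.exp (-ε) with ht
  have ht0 : 0 < t := Real.exp_pos _
  have ht1 : t ≤ 1 := Real.exp_le_one_iff.mpr (by linarith)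
  have hE1 : (1 : ℝ) ≤ Real.exp ε := Real.one_le_exp hε
  have hvR : (2 : ℝ) ≤ (v : ℝ) := by exact_mod_cast hv
  -- the base constant
  set B : ℝ := 1 + ((v : ℝ) - 1) * t with hB
  have hB1 : (1 : ℝ) ≤ B := by
    have hge : 0 ≤ ((v : ℝ) - 1) * t := mul_nonneg (by linarith) ht0.le
    simp only [hB]; linarith
  have hB0 : 0 < B := lt_of_lt_of_le one_pos hB1
  set K : ℝ := B ^ u with hK
  have hK0 : 0 < K := pow_pos hB0 u
  -- a point with positive prior
  obtain ⟨x₀, hx₀⟩ : ∃ x, 0 < p x := by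
    by_contra hcon
    push_neg at hcon
    have : ∀ x : Fin u → Fin v, p x = 0 := fun x => le_antisymm (hcon x) (hp0 x)
    rw [Finset.sum_congr rfl (fun x _ => this x)] at hp1
    simp at hp1
  have hbdd : BddAbove (Set.range p) := (Set.finite_range p).bddAbove
  have hsupp : 0 < ⨆ x, p x := lt_of_lt_of_le hx₀ (le_ciSup hbdd x₀)
  -- positivity of the numerator
  have hnum_ge : p x₀ ≤ ∑ z, ⨆ x, p x * M x z := by
    calc p x₀ = ∑ z, p x₀ * M x₀ z := by rw [← Finset.mul_sum, hM1, mul_one]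
      _ ≤ ∑ z, ⨆ x, p x * M x z := by
          apply Finset.sum_le_sum
          intro z _
          exact le_ciSup (f := fun x => p x * M x z) (Set.finite_range _).bddAbove x₀
  have hnum_pos : 0 < ∑ z, ⨆ x, p x * M x z := lt_of_lt_of_le hx₀ hnum_ge
  -- column maxima
  set S : Z → ℝ := fun z => Finset.univ.sup' Finset.univ_nonempty (fun x => M x z) with hS
  have hsup_le : ∀ z, (⨆ x, p x * M x z) ≤ (⨆ x, p x) * S z := by
    intro z
    apply ciSup_le
    intro x
    apply mul_le_mul (le_ciSup hbdd x) (Finset.le_sup' _ (Finset.mem_univ x)) (hM0 x z)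
      (le_of_lt hsupp)
  -- key column bound : S z * K ≤ ∑ x, M x z
  have hcol : ∀ z, S z * K ≤ ∑ x, M x z := by
    intro z
    obtain ⟨xz, -, hxz⟩ := Finset.exists_mem_eq_sup' Finset.univ_nonempty (fun x => M x z)
    have hpoint : ∀ x : Fin u → Fin v, t ^ hammingDist xz x * S z ≤ M x z := by
      intro x
      have hchain : M xz z ≤ Real.exp (ε * hammingDist xz x) * M x z :=
        dp_chain_aux hM0 hDP (hammingDist xz x) xz x rfl z
      have htpow : t ^ hammingDist xz x = Real.exp (-(ε * hammingDist xz x)) := by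
        rw [ht, ← Real.exp_nat_mul]
        ring_nf
      have := mul_le_mul_of_nonneg_left hchain (le_of_lt (Real.exp_pos (-(ε * hammingDist xz x))))
      rw [← mul_assoc, ← Real.exp_add, neg_add_cancel, Real.exp_zero, one_mul] at this
      have hSz : S z = M xz z := hxz
      rw [htpow, hSz]
      exact this
    calc S z * K = ∑ x : Fin u → Fin v, t ^ hammingDist xz x * S z := by
          rw [← Finset.sum_mul, sum_pow_hamming t xz, mul_comm]
      _ ≤ ∑ x, M x z := Finset.sum_le_sum (fun x _ => hpoint x)
  -- summing the column bound
  have hScol : (∑ z, S z) * K ≤ (v : ℝ) ^ u := by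
    calc (∑ z, S z) * K = ∑ z, S z * K := by rw [Finset.sum_mul]
      _ ≤ ∑ z, ∑ x, M x z := Finset.sum_le_sum (fun z _ => hcol z)
      _ = ∑ x : Fin u → Fin v, ∑ z, M x z := Finset.sum_comm
      _ = (v : ℝ) ^ u := by
          rw [Finset.sum_congr rfl (fun x _ => hM1 x), Finset.sum_const, Finset.card_univ]
          simp [Fintype.card_fun]
  -- numerator bound
  have hnum_le : (∑ z, ⨆ x, p x * M x z) ≤ (⨆ x, p x) * ((v : ℝ) ^ u / K) := by
    calc (∑ z, ⨆ x, p x * M x z) ≤ ∑ z, (⨆ x, p x) * S z :=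
          Finset.sum_le_sum (fun z _ => hsup_le z)
      _ = (⨆ x, p x) * ∑ z, S z := by rw [Finset.mul_sum]
      _ ≤ (⨆ x, p x) * ((v : ℝ) ^ u / K) := by
          apply mul_le_mul_of_nonneg_left _ (le_of_lt hsupp)
          rw [le_div_iff₀ hK0]
          exact hScol
  have hratio : (∑ z, ⨆ x, p x * M x z) / (⨆ x, p x) ≤ (v : ℝ) ^ u / K := by
    rw [div_le_iff₀ hsupp, mul_comm]
    exact hnum_le
  have hratio_pos : 0 < (∑ z, ⨆ x, p x * M x z) / (⨆ x, p x) :=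
    div_pos hnum_pos hsupp
  -- identify the base
  have hbase : (v : ℝ) / B = (v : ℝ) * Real.exp ε / ((v : ℝ) - 1 + Real.exp ε) := by
    have hEt : Real.exp ε * t = 1 := by
      rw [ht, ← Real.exp_add, add_neg_cancel, Real.exp_zero]
    have hden : (v : ℝ) - 1 + Real.exp ε = Real.exp ε * B := by
      rw [hB]; nlinarith [hEt]
    rw [hden, mul_comm ((v : ℝ)) (Real.exp ε), mul_div_mul_left _ _ (Real.exp_pos ε).ne']
  calc Real.logb 2 ((∑ z, ⨆ x, p x * M x z) / (⨆ x, p x))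
      ≤ Real.logb 2 ((v : ℝ) ^ u / K) :=
        Real.logb_le_logb_of_le (by norm_num) hratio_pos hratio
    _ = u * Real.logb 2 ((v : ℝ) * Real.exp ε / ((v : ℝ) - 1 + Real.exp ε)) := by
        rw [hK, ← div_pow, Real.logb_pow, hbase]
end

section
/- Let u ≥ 1, v ≥ 2 be natural numbers and ε ≥ 0. There exist a nonempty finite set Z and a channel matrix M from X = (Fin u → Fin v) to Z such that M provides ε-differential privacy and the min-entropy leakage of M under the uniform prior equals exactly u · log₂( v·e^ε / (v − 1 + e^ε) ); equivalently, log₂( ∑_{z ∈ Z} max_{x ∈ X} M x z ) = u · log₂( v·e^ε / (v − 1 + e^ε) ). -/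
/-!
The extremal channel is coordinatewise randomized response: each entry of the database is
reported truthfully with probability `e^ε / (v - 1 + e^ε)` and as any given other value with
probability `1 / (v - 1 + e^ε)`, independently over the `u` coordinates. Changing one coordinate
changes a single factor of the product, by a ratio of at most `e^ε`. The sum of column maxima is
multiplicative over product channels, since the maximum of a product of independent nonnegative
factors is the product of their maxima; for randomized response every column maximum sits on the
diagonal, so the sum of column maxima is `v e^ε / (v - 1 + e^ε)`, and taking `log₂` of its `u`-th
power gives the leakage.
-/

open Finset

section ProductChannel

variable {ι α β : Type*} [Fintype ι]

def productChannel (f : α → β → ℝ) (x : ι → α) (y : ι → β) : ℝ :=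
  ∏ i, f (x i) (y i)

variable {f : α → β → ℝ}

theorem productChannel_nonneg (hf : ∀ a b, 0 ≤ f a b) (x : ι → α) (y : ι → β) :
    0 ≤ productChannel f x y :=
  prod_nonneg fun _ _ => hf _ _

theorem sum_productChannel [DecidableEq ι] [Fintype β] (hf : ∀ a, ∑ b, f a b = 1)
    (x : ι → α) : ∑ y, productChannel f x y = 1 := by
  simp only [productChannel, ← Fintype.prod_sum fun i b => f (x i) b, hf, prod_const_one]

theorem productChannel_le_exp_mul_hammingDist [DecidableEq α] {ε : ℝ}
    (hf : ∀ a b, 0 ≤ f a b) (hdp : ∀ a a' b, f a b ≤ Real.exp ε * f a' b)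
    (x x' : ι → α) (y : ι → β) :
    productChannel f x y ≤ Real.exp (ε * hammingDist x x') * productChannel f x' y := by
  have hcoord : ∀ i, f (x i) (y i)
      ≤ Real.exp (ε * if x i ≠ x' i then 1 else 0) * f (x' i) (y i) := by
    intro i
    by_cases h : x i = x' i
    · simp [h]
    · simpa [h] using hdp (x i) (x' i) (y i)
  have hexp : Real.exp (ε * hammingDist x x')
      = ∏ i, Real.exp (ε * if x i ≠ x' i then 1 else 0) := by
    rw [← Real.exp_sum, ← mul_sum, sum_boole]
    rfl
  rw [hexp, productChannel, productChannel, ← prod_mul_distrib]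
  exact prod_le_prod (fun i _ => hf _ _) fun i _ => hcoord i

theorem iSup_productChannel [Finite α] [Nonempty α] (hf : ∀ a b, 0 ≤ f a b) (y : ι → β) :
    ⨆ x, productChannel f x y = ∏ i, ⨆ a, f a (y i) := by
  have hbdd : ∀ b, BddAbove (Set.range fun a => f a b) := fun b =>
    (Set.finite_range fun a : α => f a b).bddAbove
  choose argmax hargmax using fun b => Finite.exists_max fun a : α => f a b
  have hmax : ∀ b, ⨆ a, f a b = f (argmax b) b := fun b =>
    le_antisymm (ciSup_le (hargmax b)) (le_ciSup (hbdd b) _)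
  refine le_antisymm (ciSup_le fun x => ?_) ?_
  · exact prod_le_prod (fun i _ => hf _ _) fun i _ => le_ciSup (hbdd _) (x i)
  · simp only [hmax]
    exact le_ciSup (Set.finite_range fun x : ι → α => productChannel f x y).bddAbove
      fun i => argmax (y i)

theorem sum_iSup_productChannel [DecidableEq ι] [Finite α] [Nonempty α] [Fintype β]
    (hf : ∀ a b, 0 ≤ f a b) :
    ∑ y : ι → β, ⨆ x, productChannel f x y = (∑ b, ⨆ a, f a b) ^ Fintype.card ι := by
  simp only [iSup_productChannel hf, ← Fintype.prod_sum fun _ b => ⨆ a, f a b, prod_const,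
    card_univ]

end ProductChannel

section RandomizedResponse

variable {α : Type*} [Fintype α] {ε : ℝ}

theorem card_sub_one_add_exp_pos [Nonempty α] (ε : ℝ) :
    0 < (Fintype.card α : ℝ) - 1 + Real.exp ε := by
  have : (1 : ℝ) ≤ Fintype.card α := by exact_mod_cast Fintype.card_pos
  linarith [Real.exp_pos ε]

variable [DecidableEq α]

noncomputable def randomizedResponse (ε : ℝ) (a b : α) : ℝ :=
  (if a = b then Real.exp ε else 1) / (Fintype.card α - 1 + Real.exp ε)

theorem randomizedResponse_nonneg (a b : α) : 0 ≤ randomizedResponse ε a b := by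
  have : Nonempty α := ⟨a⟩
  have hpos := card_sub_one_add_exp_pos (α := α) ε
  unfold randomizedResponse
  split <;> positivity

theorem sum_randomizedResponse (a : α) : ∑ b, randomizedResponse ε a b = 1 := by
  have : Nonempty α := ⟨a⟩
  have hpos := card_sub_one_add_exp_pos (α := α) ε
  simp only [randomizedResponse, ← sum_div, div_eq_one_iff_eq hpos.ne']
  have hsplit : ∀ b,
      (if a = b then Real.exp ε else 1) = 1 + if a = b then Real.exp ε - 1 else 0 := by
    intro b
    split_ifs <;> ring
  simp only [hsplit, sum_add_distrib, Fintype.sum_ite_eq, sum_const, card_univ, nsmul_eq_mul,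
    mul_one]
  ring

theorem randomizedResponse_le_exp_mul (hε : 0 ≤ ε) (a a' b : α) :
    randomizedResponse ε a b ≤ Real.exp ε * randomizedResponse ε a' b := by
  have : Nonempty α := ⟨a⟩
  have hpos := card_sub_one_add_exp_pos (α := α) ε
  have hexp := Real.one_le_exp hε
  unfold randomizedResponse
  rw [← mul_div_assoc, div_le_div_iff_of_pos_right hpos]
  split_ifs <;> nlinarith

theorem randomizedResponse_le_diag (hε : 0 ≤ ε) (a b : α) :
    randomizedResponse ε a b ≤ randomizedResponse ε b b := by
  have : Nonempty α := ⟨a⟩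
  have hpos := card_sub_one_add_exp_pos (α := α) ε
  unfold randomizedResponse
  rw [if_pos rfl]
  gcongr
  split_ifs
  · rfl
  · exact Real.one_le_exp hε

theorem iSup_randomizedResponse (hε : 0 ≤ ε) (b : α) :
    ⨆ a, randomizedResponse ε a b = Real.exp ε / (Fintype.card α - 1 + Real.exp ε) := by
  have hdiag : randomizedResponse ε b b = Real.exp ε / (Fintype.card α - 1 + Real.exp ε) := by
    simp [randomizedResponse]
  have : Nonempty α := ⟨b⟩
  rw [← hdiag]
  exact le_antisymm (ciSup_le fun a => randomizedResponse_le_diag hε a b)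
    (le_ciSup (Set.finite_range fun a => randomizedResponse ε a b).bddAbove b)

theorem sum_iSup_randomizedResponse (hε : 0 ≤ ε) :
    ∑ b : α, ⨆ a, randomizedResponse ε a b
      = Fintype.card α * Real.exp ε / (Fintype.card α - 1 + Real.exp ε) := by
  simp only [iSup_randomizedResponse hε, sum_const, card_univ, nsmul_eq_mul, mul_div_assoc]

end RandomizedResponse

theorem dp_leakage_bound_tight_general
    (u v : ℕ) (hv : 2 ≤ v)
    (ε : ℝ) (hε : 0 ≤ ε) :
    ∃ (m : ℕ) (_ : 1 ≤ m) (M : (Fin u → Fin v) → Fin m → ℝ),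
      (∀ x z, 0 ≤ M x z) ∧
      (∀ x, ∑ z, M x z = 1) ∧
      (∀ x x' : Fin u → Fin v, hammingDist x x' = 1 →
        ∀ z, M x z ≤ Real.exp ε * M x' z) ∧
      Real.logb 2 (∑ z, ⨆ x, M x z)
        = u * Real.logb 2 (v * Real.exp ε / (v - 1 + Real.exp ε)) := by
  have : Nonempty (Fin v) := ⟨⟨0, by omega⟩⟩
  let e : (Fin u → Fin v) ≃ Fin (v ^ u) := finFunctionFinEquiv
  let rr : Fin v → Fin v → ℝ := randomizedResponse ε
  refine ⟨v ^ u, Nat.one_le_pow _ _ (by omega), fun x z => productChannel rr x (e.symm z),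
    fun x z => productChannel_nonneg randomizedResponse_nonneg x _, fun x => ?_,
    fun x x' hxx' z => ?_, ?_⟩
  · rw [e.symm.sum_comp (productChannel rr x)]
    exact sum_productChannel sum_randomizedResponse x
  · simpa [hxx'] using productChannel_le_exp_mul_hammingDist randomizedResponse_nonneg
      (randomizedResponse_le_exp_mul hε) x x' (e.symm z)
  · rw [e.symm.sum_comp fun y => ⨆ x, productChannel rr x y,
      sum_iSup_productChannel randomizedResponse_nonneg, sum_iSup_randomizedResponse hε,
      Real.logb_pow]
    simp

/-- **Proposition 2 (tightness of the leakage bound).** For every `u ≥ 1`, `v ≥ 2`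
and `ε ≥ 0` there exist a nonempty finite set `Z` (here `Fin m`, `m ≥ 1`) and a channel
matrix `M` from `X = (Fin u → Fin v)` to `Z` providing `ε`-differential privacy whose
min-entropy leakage under the uniform prior, `log₂ (∑_z max_x M x z)`, equals
`u * log₂ (v * e^ε / (v - 1 + e^ε))`. -/
theorem dp_leakage_bound_tight
    (u v : ℕ) (hu : 1 ≤ u) (hv : 2 ≤ v)
    (ε : ℝ) (hε : 0 ≤ ε) :
    ∃ (m : ℕ) (_ : 1 ≤ m) (M : (Fin u → Fin v) → Fin m → ℝ),
      (∀ x z, 0 ≤ M x z) ∧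
      (∀ x, ∑ z, M x z = 1) ∧
      (∀ x x' : Fin u → Fin v, hammingDist x x' = 1 →
        ∀ z, M x z ≤ Real.exp ε * M x' z) ∧
      Real.logb 2 (∑ z, ⨆ x, M x z)
        = u * Real.logb 2 (v * Real.exp ε / (v - 1 + Real.exp ε)) :=
  dp_leakage_bound_tight_general u v hv ε hε
end

section
/- Let u ≥ 1, v ≥ 2 be naturals, X = (Fin u → Fin v), Z a nonempty finite set, ε ≥ 0, and let M be a channel matrix from X to Z providing ε-differential privacy. Fix an individual i ∈ Fin u and values D : Fin u → Fin v for the other individuals, and let X_{D⁻} = { x ∈ X | x j = D j for all j ≠ i } be the set of databases agreeing with D outside coordinate i. Then for every prior probability distribution q on X_{D⁻}, the min-entropy leakage of the restricted channel (the rows of M indexed by X_{D⁻}) satisfies I∞(q, M restricted to X_{D⁻}) ≤ ε · log₂ e. -/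
open Finset

/-- **Theorem 4 (leakage about an individual).** If `M` provides `ε`-differential
privacy, then for every individual `i`, every fixed assignment `D` of values to the
other individuals, and every prior `q` on the set `X_{D⁻}` of databases agreeing with
`D` outside coordinate `i`, the min-entropy leakage of the channel restricted to
`X_{D⁻}` is at most `ε * log₂ e`. -/
theorem dp_bounds_individual_leakage
    (u v : ℕ) (hu : 1 ≤ u) (hv : 2 ≤ v)
    (Z : Type) [Fintype Z] [Nonempty Z]
    (ε : ℝ) (hε : 0 ≤ ε)
    (M : (Fin u → Fin v) → Z → ℝ)
    (hM0 : ∀ x z, 0 ≤ M x z)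
    (hM1 : ∀ x, ∑ z, M x z = 1)
    (hDP : ∀ x x' : Fin u → Fin v, hammingDist x x' = 1 →
      ∀ z, M x z ≤ Real.exp ε * M x' z)
    (i : Fin u) (D : Fin u → Fin v)
    (q : {x : Fin u → Fin v // ∀ j, j ≠ i → x j = D j} → ℝ)
    (hq0 : ∀ a, 0 ≤ q a) (hq1 : ∑ a, q a = 1) :
    Real.logb 2 ((∑ z, ⨆ a : {x : Fin u → Fin v // ∀ j, j ≠ i → x j = D j},
        q a * M a.val z) / (⨆ a, q a))
      ≤ ε * Real.logb 2 (Real.exp 1) := by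
  have b : {x : Fin u → Fin v // ∀ j, j ≠ i → x j = D j} := ⟨D, fun _ _ => rfl⟩
  -- any two rows indexed by the subtype are within factor exp ε
  have hMab : ∀ (a c : {x : Fin u → Fin v // ∀ j, j ≠ i → x j = D j}) (z : Z),
      M a.1 z ≤ Real.exp ε * M c.1 z := by
    intro a c z
    by_cases h : a.1 = c.1
    · rw [h]
      exact le_mul_of_one_le_left (hM0 _ _) (Real.one_le_exp hε)
    · apply hDP _ _ _ z
      have hset : (Finset.univ.filter fun j => a.1 j ≠ c.1 j) = {i} := by
        ext j
        simp only [Finset.mem_filter, Finset.mem_univ, true_and, Finset.mem_singleton]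
        constructor
        · intro hj
          by_contra hji
          exact hj ((a.2 j hji).trans (c.2 j hji).symm)
        · intro hj heq
          subst hj
          apply h
          funext k
          by_cases hk : k = j
          · subst hk; exact heq
          · exact (a.2 k hk).trans (c.2 k hk).symm
      simp only [hammingDist, hset, Finset.card_singleton]
  haveI : Nonempty {x : Fin u → Fin v // ∀ j, j ≠ i → x j = D j} := ⟨b⟩
  have hbdd : BddAbove (Set.range q) := (Set.finite_range q).bddAbove
  have hqsup : ∀ a, q a ≤ ⨆ a, q a := fun a => le_ciSup hbdd a
  -- sup of q is positive
  have hpos : 0 < ⨆ a, q a := by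
    obtain ⟨a, ha⟩ : ∃ a, 0 < q a := by
      by_contra hcl
      push_neg at hcl
      have : ∑ a, q a = 0 := le_antisymm (Finset.sum_nonpos fun a _ => hcl a)
        (Finset.sum_nonneg fun a _ => hq0 a)
      rw [hq1] at this; norm_num at this
    exact lt_of_lt_of_le ha (hqsup a)
  -- bound the numerator
  have hnum : (∑ z, ⨆ a : {x : Fin u → Fin v // ∀ j, j ≠ i → x j = D j},
      q a * M a.val z) ≤ Real.exp ε * (⨆ a, q a) := by
    have step : ∀ z, (⨆ a : {x : Fin u → Fin v // ∀ j, j ≠ i → x j = D j},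
        q a * M a.val z) ≤ (⨆ a, q a) * (Real.exp ε * M b.1 z) := by
      intro z
      apply ciSup_le
      intro a
      exact mul_le_mul (hqsup a) (hMab a b z) (hM0 _ _) hpos.le
    calc (∑ z, ⨆ a : {x : Fin u → Fin v // ∀ j, j ≠ i → x j = D j}, q a * M a.val z)
        ≤ ∑ z, (⨆ a, q a) * (Real.exp ε * M b.1 z) := Finset.sum_le_sum fun z _ => step z
      _ = (⨆ a, q a) * Real.exp ε * ∑ z, M b.1 z := by
          rw [Finset.mul_sum]; apply Finset.sum_congr rfl; intros; ring
      _ = Real.exp ε * (⨆ a, q a) := by rw [hM1]; ring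
  have hnum0 : 0 ≤ ∑ z, ⨆ a : {x : Fin u → Fin v // ∀ j, j ≠ i → x j = D j},
      q a * M a.val z := by
    apply Finset.sum_nonneg
    intro z _
    have h1 : q b * M b.1 z ≤ ⨆ a : {x : Fin u → Fin v // ∀ j, j ≠ i → x j = D j},
        q a * M a.val z := le_ciSup (f := fun a : {x : Fin u → Fin v // ∀ j, j ≠ i → x j = D j} => q a * M a.val z) ((Set.finite_range _).bddAbove) b
    exact le_trans (mul_nonneg (hq0 b) (hM0 _ _)) h1
  have hratio : (∑ z, ⨆ a : {x : Fin u → Fin v // ∀ j, j ≠ i → x j = D j},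
      q a * M a.val z) / (⨆ a, q a) ≤ Real.exp ε := by
    rw [div_le_iff₀ hpos]
    linarith [hnum]
  have hRHS : ε * Real.logb 2 (Real.exp 1) = Real.logb 2 (Real.exp ε) := by
    simp [Real.logb, Real.log_exp]; ring
  rw [hRHS]
  rcases eq_or_lt_of_le (div_nonneg hnum0 hpos.le) with h | h
  · rw [← h, Real.logb_zero]
    rw [Real.logb, Real.log_exp]
    positivity
  · exact Real.logb_le_logb_of_le (by norm_num) h hratio
end

section
/- Let A and Z be nonempty finite sets, ε ≥ 0, and let M be a channel matrix from A to Z satisfying the ε-ratio condition M a z ≤ e^ε · M a' z for all a, a' ∈ A and all z ∈ Z. Then for every prior probability distribution q on A, the min-entropy leakage satisfies I∞(q, M) ≤ ε · log₂ e. -/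
open Finset

/-- **Lemma (ε-ratio bounds leakage).** If a channel matrix `M` from `A` to `Z`
satisfies `M a z ≤ e^ε * M a' z` for all `a, a'` and `z`, then for every prior `q`
on `A` the min-entropy leakage is at most `ε * log₂ e`. -/
theorem ratio_bounds_min_entropy_leakage
    (A : Type) [Fintype A] [Nonempty A]
    (Z : Type) [Fintype Z] [Nonempty Z]
    (ε : ℝ) (hε : 0 ≤ ε)
    (M : A → Z → ℝ)
    (hM0 : ∀ a z, 0 ≤ M a z)
    (hM1 : ∀ a, ∑ z, M a z = 1)
    (hratio : ∀ a a' : A, ∀ z, M a z ≤ Real.exp ε * M a' z)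
    (q : A → ℝ) (hq0 : ∀ a, 0 ≤ q a) (hq1 : ∑ a, q a = 1) :
    Real.logb 2 ((∑ z, ⨆ a, q a * M a z) / (⨆ a, q a))
      ≤ ε * Real.logb 2 (Real.exp 1) := by
  obtain ⟨a₀, ha₀⟩ : ∃ a, 0 < q a := by
    by_contra h
    push_neg at h
    have : ∑ a, q a ≤ 0 := Finset.sum_nonpos fun a _ => h a
    linarith [hq1]
  have hbdd : ∀ z : Z, BddAbove (Set.range fun a => q a * M a z) :=
    fun z => (Set.finite_range _).bddAbove
  have hbddq : BddAbove (Set.range q) := (Set.finite_range _).bddAbove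
  have hS : 0 < ⨆ a, q a := lt_of_lt_of_le ha₀ (le_ciSup hbddq a₀)
  have hNlb : ∀ z, q a₀ * M a₀ z ≤ ⨆ a, q a * M a z := fun z => le_ciSup (hbdd z) a₀
  have hNpos : 0 < ∑ z, ⨆ a, q a * M a z := by
    calc (0 : ℝ) < q a₀ := ha₀
    _ = ∑ z, q a₀ * M a₀ z := by rw [← Finset.mul_sum, hM1, mul_one]
    _ ≤ ∑ z, ⨆ a, q a * M a z := Finset.sum_le_sum fun z _ => hNlb z
  have hub : ∀ z, (⨆ a, q a * M a z) ≤ (⨆ a, q a) * (Real.exp ε * M a₀ z) := by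
    intro z
    refine ciSup_le fun a => ?_
    calc q a * M a z ≤ q a * (Real.exp ε * M a₀ z) :=
          mul_le_mul_of_nonneg_left (hratio a a₀ z) (hq0 a)
    _ ≤ (⨆ a, q a) * (Real.exp ε * M a₀ z) :=
          mul_le_mul_of_nonneg_right (le_ciSup hbddq a)
            (mul_nonneg (Real.exp_pos ε).le (hM0 a₀ z))
  have hsum : (∑ z, ⨆ a, q a * M a z) ≤ Real.exp ε * (⨆ a, q a) := by
    calc (∑ z, ⨆ a, q a * M a z) ≤ ∑ z, (⨆ a, q a) * (Real.exp ε * M a₀ z) :=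
          Finset.sum_le_sum fun z _ => hub z
    _ = (⨆ a, q a) * Real.exp ε * ∑ z, M a₀ z := by rw [Finset.mul_sum]; ring_nf
    _ = Real.exp ε * (⨆ a, q a) := by rw [hM1, mul_one]; ring
  have hdiv : (∑ z, ⨆ a, q a * M a z) / (⨆ a, q a) ≤ Real.exp ε :=
    (div_le_iff₀ hS).mpr (by linarith)
  calc Real.logb 2 ((∑ z, ⨆ a, q a * M a z) / (⨆ a, q a))
      ≤ Real.logb 2 (Real.exp ε) :=
        Real.logb_le_logb_of_le (by norm_num) (div_pos hNpos hS) hdiv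
    _ = ε * Real.logb 2 (Real.exp 1) := by
        simp [Real.logb, Real.log_exp]; ring
end

section
/- Let Y be a nonempty finite set equipped with a symmetric, irreflexive adjacency relation ∼ whose graph is connected, and suppose the graph (Y, ∼) admits an automorphism σ with a single orbit. Let ε > 0, let c ≥ 1 be a natural number, and suppose there exists y₀ ∈ Y such that for every natural number d > 0, the set Border_d(y₀) is either empty or has cardinality at least c. Let n = max_{y' ∈ Y} dist(y₀, y'). Then for every finite set Z and every channel matrix M from Y to Z satisfying M y z ≤ e^ε · M y' z for all z ∈ Z and all adjacent y ∼ y', the utility under the uniform prior satisfies (1/|Y|) · ∑_{z ∈ Z} max_{y ∈ Y} M y z ≤ e^{nε}(1 − e^ε) / ( e^{nε}(1 − e^ε) + c·(1 − e^{nε}) ). -/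
open Finset

/-- From any vertex along a walk, the `i`-th vertex is within distance `i`. -/
lemma aux_exists_walk_to_getVert {Y : Type} {G : SimpleGraph Y} {u v : Y}
    (w : G.Walk u v) : ∀ i : ℕ, ∃ q : G.Walk u (w.getVert i), q.length ≤ i := by
  induction w with
  | nil =>
    intro i
    refine ⟨SimpleGraph.Walk.nil.copy rfl ?_, by simp⟩
    exact (SimpleGraph.Walk.getVert_of_length_le _ (by simp)).symm
  | cons h p ih =>
    intro i
    cases i with
    | zero =>
      refine ⟨SimpleGraph.Walk.nil.copy rfl ?_, by simp⟩
      exact (SimpleGraph.Walk.getVert_zero _).symm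
    | succ i =>
      obtain ⟨q, hq⟩ := ih i
      exact ⟨(SimpleGraph.Walk.cons h q).copy rfl
        (by rw [SimpleGraph.Walk.getVert_cons_succ]), by simpa using Nat.succ_le_succ hq⟩

lemma aux_dist_getVert_le {Y : Type} {G : SimpleGraph Y} {u v : Y}
    (w : G.Walk u v) (i : ℕ) : G.dist u (w.getVert i) ≤ i := by
  obtain ⟨q, hq⟩ := aux_exists_walk_to_getVert w i
  exact le_trans (SimpleGraph.dist_le q) hq

/-- **Theorem 5 (utility bound).** Let `(Y, ∼)` be a connected graph (modelled as a
`SimpleGraph`, hence with a symmetric irreflexive adjacency) admitting an automorphism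
`σ` with a single orbit, `ε > 0`, and suppose there are `c ≥ 1` and `y₀ ∈ Y` such
that for every `d > 0` the set `Border_d(y₀)` is empty or has at least `c` elements.
Let `n` be the maximum distance from `y₀`. Then the uniform-prior (binary-gain)
utility of any `ε`-differentially private channel `M` from `Y` to `Z` is at most
`e^{nε}(1 - e^ε) / (e^{nε}(1 - e^ε) + c (1 - e^{nε}))`. -/
theorem dp_utility_bound
    (Y : Type) [Fintype Y] [Nonempty Y] [DecidableEq Y]
    (G : SimpleGraph Y) (hconn : G.Connected)
    (σ : Y ≃ Y) (hσ : ∀ y y', G.Adj y y' ↔ G.Adj (σ y) (σ y'))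
    (horbit : ∀ y y' : Y, ∃ k : ℕ, (⇑σ)^[k] y = y')
    (ε : ℝ) (hε : 0 < ε)
    (c : ℕ) (hc : 1 ≤ c)
    (y₀ : Y)
    (hborder : ∀ d : ℕ, 0 < d →
      (Finset.univ.filter fun y' => G.dist y₀ y' = d) = ∅ ∨
        c ≤ (Finset.univ.filter fun y' => G.dist y₀ y' = d).card)
    (n : ℕ) (hn : n = Finset.univ.sup fun y' => G.dist y₀ y')
    (Z : Type) [Fintype Z]
    (M : Y → Z → ℝ)
    (hM0 : ∀ y z, 0 ≤ M y z)
    (hM1 : ∀ y, ∑ z, M y z = 1)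
    (hDP : ∀ y y', G.Adj y y' → ∀ z, M y z ≤ Real.exp ε * M y' z) :
    (1 / (Fintype.card Y : ℝ)) * ∑ z, ⨆ y, M y z
      ≤ Real.exp (n * ε) * (1 - Real.exp ε) /
          (Real.exp (n * ε) * (1 - Real.exp ε) + c * (1 - Real.exp (n * ε))) := by
  classical
  set a : ℝ := Real.exp ε with ha_def
  set r : ℝ := Real.exp (-ε) with hr_def
  have ha1 : 1 < a := by
    rw [ha_def]; exact Real.one_lt_exp_iff.mpr hε
  have ha0 : 0 < a := Real.exp_pos _
  have hr0 : 0 < r := Real.exp_pos _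
  have har : a * r = 1 := by
    rw [ha_def, hr_def, ← Real.exp_add]; simp
  -- DP along walks
  have hwalk : ∀ (y y' : Y) (w : G.Walk y y') (z : Z),
      M y z ≤ Real.exp (w.length * ε) * M y' z := by
    intro y y' w z
    induction w with
    | nil => simp
    | cons h p ih =>
      rw [SimpleGraph.Walk.length_cons]
      refine le_trans (hDP _ _ h z) ?_
      refine le_trans (mul_le_mul_of_nonneg_left ih (le_of_lt ha0)) ?_
      rw [← mul_assoc, ha_def, ← Real.exp_add]
      apply le_of_eq
      congr 2
      push_cast
      ring
  have hExp : ∀ (y y' : Y) (z : Z),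
      M y z ≤ Real.exp (G.dist y y' * ε) * M y' z := by
    intro y y' z
    obtain ⟨w, hw⟩ := (hconn y y').exists_walk_length_eq_dist
    rw [← hw]
    exact hwalk y y' w z
  -- distance invariance under σ
  have hle : ∀ (τ : Y ≃ Y), (∀ p q, G.Adj p q → G.Adj (τ p) (τ q)) →
      ∀ p q, G.dist (τ p) (τ q) ≤ G.dist p q := by
    intro τ hτ p q
    obtain ⟨w, hw⟩ := (hconn p q).exists_walk_length_eq_dist
    have := SimpleGraph.dist_le (w.map ⟨⇑τ, fun h => hτ _ _ h⟩)
    rwa [SimpleGraph.Walk.length_map, hw] at this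
  have hdist1 : ∀ p q, G.dist (σ p) (σ q) = G.dist p q := by
    intro p q
    refine le_antisymm (hle σ (fun p q h => (hσ p q).mp h) p q) ?_
    have := hle σ.symm (fun p q h => by
      have := (hσ (σ.symm p) (σ.symm q)).mpr; simp at this; exact this h) (σ p) (σ q)
    simpa using this
  have hdistk : ∀ (k : ℕ) (p q : Y), G.dist ((⇑σ)^[k] p) ((⇑σ)^[k] q) = G.dist p q := by
    intro k
    induction k with
    | zero => simp
    | succ k ih =>
      intro p q
      rw [Function.iterate_succ_apply, Function.iterate_succ_apply, ih, hdist1]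
  -- border cardinality transport
  have hcard : ∀ (y : Y) (d : ℕ),
      (Finset.univ.filter fun y' => G.dist y y' = d).card
        = (Finset.univ.filter fun y' => G.dist y₀ y' = d).card := by
    intro y d
    obtain ⟨k, hk⟩ := horbit y₀ y
    subst hk
    have hinj : Function.Injective ((⇑σ)^[k]) := σ.injective.iterate k
    have hinv : ∀ x : Y, (⇑σ)^[k] ((⇑σ.symm)^[k] x) = x := by
      intro x
      exact Function.LeftInverse.iterate σ.right_inv k x
    have himg : (Finset.univ.filter fun y' => G.dist ((⇑σ)^[k] y₀) y' = d)
        = (Finset.univ.filter fun y' => G.dist y₀ y' = d).image ((⇑σ)^[k]) := by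
      ext x
      simp only [Finset.mem_filter, Finset.mem_univ, true_and, Finset.mem_image]
      constructor
      · intro hx
        refine ⟨(⇑σ.symm)^[k] x, ?_, hinv x⟩
        rw [← hdistk k y₀ ((⇑σ.symm)^[k] x), hinv x]
        exact hx
      · rintro ⟨x', hx', rfl⟩
        rw [hdistk]; exact hx'
    rw [himg, Finset.card_image_of_injective _ hinj]
  -- sup of distances from any vertex is n
  have hsup : ∀ y : Y, (Finset.univ.sup fun y' => G.dist y y') = n := by
    intro y
    obtain ⟨k, hk⟩ := horbit y₀ y
    subst hk
    rw [hn]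
    have himg : (Finset.univ : Finset Y) = Finset.univ.image ((⇑σ)^[k]) := by
      symm
      apply Finset.image_univ_of_surjective
      exact (σ.surjective.iterate k)
    conv_lhs => rw [himg]
    rw [Finset.sup_image]
    exact Finset.sup_congr rfl (fun y' _ => hdistk k y₀ y')
  have hdist_le_n : ∀ y y' : Y, G.dist y y' ≤ n := by
    intro y y'
    rw [← hsup y]
    exact Finset.le_sup (Finset.mem_univ y')
  -- border from any vertex at any 1 ≤ d ≤ n has at least c elements
  have hborder_all : ∀ (y : Y) (d : ℕ), 0 < d → d ≤ n →
      (c : ℝ) ≤ ((Finset.univ.filter fun y' => G.dist y y' = d).card : ℝ) := by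
    intro y d hd0 hdn
    -- find a vertex at distance exactly d from y
    have hne : ∃ y' : Y, G.dist y y' = d := by
      obtain ⟨y'', _, hy''⟩ := Finset.exists_mem_eq_sup
        (Finset.univ : Finset Y) Finset.univ_nonempty (fun y' => G.dist y y')
      rw [hsup y] at hy''
      obtain ⟨w, hw⟩ := (hconn y y'').exists_walk_length_eq_dist
      refine ⟨w.getVert d, ?_⟩
      have h1 : G.dist y (w.getVert d) ≤ d := aux_dist_getVert_le w d
      have hwl : w.length = n := by rw [hw, ← hy'']
      have h2 : G.dist (w.getVert d) y'' ≤ n - d := by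
        have hrev : w.reverse.getVert (w.length - d) = w.getVert d := by
          rw [SimpleGraph.Walk.getVert_reverse]
          congr 1
          omega
        have h3 := aux_dist_getVert_le w.reverse (w.length - d)
        rw [hrev] at h3
        rw [SimpleGraph.dist_comm]
        omega
      have htri := hconn.dist_triangle (u := y) (v := w.getVert d) (w := y'')
      rw [← hy''] at htri
      omega
    obtain ⟨y', hy'⟩ := hne
    have hne₀ : (Finset.univ.filter fun y'' => G.dist y y'' = d).Nonempty :=
      ⟨y', by simp [hy']⟩
    have hcard_eq := hcard y d
    rcases hborder d hd0 with h | h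
    · exfalso
      have h0 : (Finset.univ.filter fun y'' => G.dist y y'' = d).card = 0 := by
        rw [hcard y d, h, Finset.card_empty]
      have h1 := Finset.card_pos.mpr hne₀
      omega
    · rw [← hcard_eq] at h
      exact_mod_cast h
  -- the key quantity
  set S : ℝ := 1 + c * ∑ i ∈ Finset.range n, r ^ (i + 1) with hS_def
  have hS1 : (1 : ℝ) ≤ S := by
    have : (0:ℝ) ≤ c * ∑ i ∈ Finset.range n, r ^ (i + 1) := by
      apply mul_nonneg (by positivity)
      apply Finset.sum_nonneg
      intro i _
      positivity
    linarith
  have hS0 : 0 < S := lt_of_lt_of_le one_pos hS1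
  -- per-z inequality
  have hSz : ∀ z : Z, S * (⨆ y, M y z) ≤ ∑ y, M y z := by
    intro z
    obtain ⟨ys, hys⟩ := Finite.exists_max (fun y => M y z)
    have hsup_eq : (⨆ y, M y z) = M ys z :=
      le_antisymm (ciSup_le hys)
        (le_ciSup (f := fun y => M y z) (Set.Finite.bddAbove (Set.finite_range _)) ys)
    rw [hsup_eq]
    have hmaps : ∀ y ∈ (Finset.univ : Finset Y), G.dist ys y ∈ Finset.range (n + 1) :=
      fun y _ => Finset.mem_range.mpr (Nat.lt_succ_of_le (hdist_le_n ys y))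
    rw [← Finset.sum_fiberwise_of_maps_to hmaps (fun y => M y z)]
    have hsplit : S * M ys z
        = M ys z + ∑ i ∈ Finset.range n, (c : ℝ) * r ^ (i + 1) * M ys z := by
      rw [hS_def, ← Finset.sum_mul, ← Finset.mul_sum]
      ring
    have hexpand : ∑ d ∈ Finset.range (n + 1),
        ∑ y ∈ Finset.univ.filter fun y => G.dist ys y = d, M y z
        = (∑ y ∈ Finset.univ.filter fun y => G.dist ys y = 0, M y z)
          + ∑ i ∈ Finset.range n,
              ∑ y ∈ Finset.univ.filter fun y => G.dist ys y = i + 1, M y z := by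
      rw [Finset.sum_range_succ']
      ring
    rw [hsplit, hexpand]
    apply add_le_add
    · -- d = 0 term
      have h0 : (Finset.univ.filter fun y => G.dist ys y = 0) = {ys} := by
        ext y
        simp only [Finset.mem_filter, Finset.mem_univ, true_and, Finset.mem_singleton]
        rw [hconn.dist_eq_zero_iff]
        exact eq_comm
      rw [h0, Finset.sum_singleton]
    · -- d ≥ 1 terms
      apply Finset.sum_le_sum
      intro i hi
      have hin : i + 1 ≤ n := Nat.succ_le_of_lt (Finset.mem_range.mp hi)
      have hlow : ∀ y ∈ Finset.univ.filter fun y => G.dist ys y = i + 1,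
          r ^ (i + 1) * M ys z ≤ M y z := by
        intro y hy
        simp only [Finset.mem_filter, Finset.mem_univ, true_and] at hy
        have h1 := hExp ys y z
        rw [hy] at h1
        have h2 : r ^ (i + 1) * Real.exp (((i : ℝ) + 1) * ε) = 1 := by
          rw [hr_def, ← Real.exp_nat_mul, ← Real.exp_add]
          push_cast
          ring_nf
          simp
        calc r ^ (i + 1) * M ys z
            ≤ r ^ (i + 1) * (Real.exp (((i + 1 : ℕ) : ℝ) * ε) * M y z) := by
              apply mul_le_mul_of_nonneg_left _ (by positivity)
              exact_mod_cast h1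
          _ = (r ^ (i + 1) * Real.exp (((i : ℝ) + 1) * ε)) * M y z := by
              push_cast; ring
          _ = M y z := by rw [h2, one_mul]
      have hnn : 0 ≤ r ^ (i + 1) * M ys z :=
        mul_nonneg (by positivity) (hM0 ys z)
      calc (c : ℝ) * r ^ (i + 1) * M ys z
          = (c : ℝ) * (r ^ (i + 1) * M ys z) := by ring
        _ ≤ ((Finset.univ.filter fun y => G.dist ys y = i + 1).card : ℝ)
              * (r ^ (i + 1) * M ys z) :=
            mul_le_mul_of_nonneg_right
              (hborder_all ys (i + 1) (Nat.succ_pos i) hin) hnn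
        _ ≤ ∑ y ∈ Finset.univ.filter fun y => G.dist ys y = i + 1, M y z := by
            have := Finset.card_nsmul_le_sum
              (Finset.univ.filter fun y => G.dist ys y = i + 1)
              (fun y => M y z) (r ^ (i + 1) * M ys z) hlow
            simpa [nsmul_eq_mul] using this
  -- sum over z
  have hsum_sup_nonneg : 0 ≤ ∑ z, ⨆ y, M y z := by
    apply Finset.sum_nonneg
    intro z _
    have := le_ciSup (Set.Finite.bddAbove (Set.finite_range (fun y => M y z)))
      (Classical.arbitrary Y)
    exact le_trans (hM0 _ z) this
  have hYge : S * (∑ z, ⨆ y, M y z) ≤ (Fintype.card Y : ℝ) := by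
    calc S * (∑ z, ⨆ y, M y z) = ∑ z, S * (⨆ y, M y z) := Finset.mul_sum _ _ _
      _ ≤ ∑ z, ∑ y, M y z := Finset.sum_le_sum (fun z _ => hSz z)
      _ = ∑ y, ∑ z, M y z := Finset.sum_comm
      _ = ∑ y : Y, (1 : ℝ) := by
          apply Finset.sum_congr rfl
          intro y _
          exact hM1 y
      _ = (Fintype.card Y : ℝ) := by simp
  have hcardY : (0 : ℝ) < (Fintype.card Y : ℝ) := by
    exact_mod_cast Fintype.card_pos
  have hmain : (1 / (Fintype.card Y : ℝ)) * ∑ z, ⨆ y, M y z ≤ 1 / S := by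
    rw [div_mul_eq_mul_div, one_mul, div_le_div_iff₀ hcardY hS0, one_mul]
    calc (∑ z, ⨆ y, M y z) * S = S * (∑ z, ⨆ y, M y z) := by ring
      _ ≤ (Fintype.card Y : ℝ) := hYge
  -- algebraic identity : 1 / S equals the stated bound
  set u : ℝ := Real.exp (n * ε) with hu_def
  have hu_pow : u = a ^ n := by
    rw [hu_def, ha_def, ← Real.exp_nat_mul]
  have hu1 : 1 ≤ u := by
    rw [hu_def]
    apply Real.one_le_exp
    positivity
  have hrn : r ^ n = Real.exp ((n : ℝ) * -ε) := by
    rw [hr_def, ← Real.exp_nat_mul]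
  have hur : u * r ^ n = 1 := by
    have hz : ((n : ℝ) * ε + (n : ℝ) * -ε) = 0 := by ring
    rw [hu_def, hrn, ← Real.exp_add, hz, Real.exp_zero]
  have hD_neg : u * (1 - a) + c * (1 - u) < 0 := by
    have h1 : u * (1 - a) < 0 := mul_neg_of_pos_of_neg (by linarith) (by linarith)
    have h2 : (c : ℝ) * (1 - u) ≤ 0 := mul_nonpos_of_nonneg_of_nonpos (by positivity) (by linarith)
    linarith
  have hD0 : u * (1 - a) + c * (1 - u) ≠ 0 := ne_of_lt hD_neg
  have hkey : (1 : ℝ) / S = u * (1 - a) / (u * (1 - a) + c * (1 - u)) := by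
    rw [div_eq_div_iff (ne_of_gt hS0) hD0, one_mul]
    set T : ℝ := ∑ i ∈ Finset.range n, r ^ i with hT_def
    have hgeom : T * (r - 1) = r ^ n - 1 := geom_sum_mul r n
    have hsum_eq : ∑ i ∈ Finset.range n, r ^ (i + 1) = r * T := by
      rw [hT_def, Finset.mul_sum]
      apply Finset.sum_congr rfl
      intro i _
      rw [pow_succ]
      ring
    rw [hS_def, hsum_eq]
    -- goal : u*(1-a) + c*(1-u) = u*(1-a)*(1 + c*(r*T))
    linear_combination (c * u * T) * har - (c * u) * hgeom - c * hur
  rw [hkey] at hmain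
  exact hmain
end

section
/- Let Y be a nonempty finite set with a symmetric, irreflexive adjacency relation ∼ whose graph is connected and admits an automorphism with a single orbit, let ε > 0, and suppose there exists a natural number c ≥ 1 such that for every y ∈ Y and every natural number d > 0, |Border_d(y)| is either 0 or exactly c. Let n be the diameter of (Y, ∼) and set α = e^{nε}(1 − e^ε) / ( e^{nε}(1 − e^ε) + c·(1 − e^{nε}) ). Define M : Y → Y → ℝ by M y z = α / e^{ε·dist(y,z)}. Then: (1) M is a legal channel matrix, i.e. M y z ≥ 0 and ∑_{z ∈ Y} M y z = 1 for every y; (2) M y z ≤ e^ε · M y' z for all z and all adjacent y ∼ y' (so composing M with any query f whose answer set is Y yields an ε-differentially private mechanism); and (3) M maximizes uniform-prior utility: its utility (1/|Y|) ∑_{z ∈ Y} max_{y} M y z equals α, and every channel matrix M' from Y to any finite set Z satisfying M' y z ≤ e^ε · M' y' z for all adjacent y ∼ y' has uniform-prior utility at most α. -/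
open Finset

lemma aux_dist_map {Y : Type} {G : SimpleGraph Y} (hconn : G.Connected)
    (τ : Y → Y) (hτ : ∀ a b, G.Adj a b → G.Adj (τ a) (τ b)) (y y' : Y) :
    G.dist (τ y) (τ y') ≤ G.dist y y' := by
  obtain ⟨p, hp⟩ := hconn.exists_walk_length_eq_dist y y'
  have := SimpleGraph.dist_le (p.map ⟨τ, fun h => hτ _ _ h⟩)
  rwa [SimpleGraph.Walk.length_map, hp] at this

lemma aux_adj_iter {Y : Type} {G : SimpleGraph Y} (σ : Y ≃ Y)
    (hσ : ∀ y y', G.Adj y y' ↔ G.Adj (σ y) (σ y')) (k : ℕ) :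
    ∀ a b, G.Adj a b → G.Adj ((⇑σ)^[k] a) ((⇑σ)^[k] b) := by
  induction k with
  | zero => simp
  | succ k ih =>
    intro a b hab
    rw [Function.iterate_succ_apply, Function.iterate_succ_apply]
    exact ih _ _ ((hσ a b).mp hab)

lemma aux_adj_iter_symm {Y : Type} {G : SimpleGraph Y} (σ : Y ≃ Y)
    (hσ : ∀ y y', G.Adj y y' ↔ G.Adj (σ y) (σ y')) (k : ℕ) :
    ∀ a b, G.Adj a b → G.Adj ((⇑σ.symm)^[k] a) ((⇑σ.symm)^[k] b) := by
  apply aux_adj_iter σ.symm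
  intro y y'
  have := hσ (σ.symm y) (σ.symm y')
  simpa using this.symm

lemma aux_dist_iter {Y : Type} {G : SimpleGraph Y} (hconn : G.Connected) (σ : Y ≃ Y)
    (hσ : ∀ y y', G.Adj y y' ↔ G.Adj (σ y) (σ y')) (k : ℕ) (y y' : Y) :
    G.dist ((⇑σ)^[k] y) ((⇑σ)^[k] y') = G.dist y y' := by
  apply le_antisymm (aux_dist_map hconn _ (aux_adj_iter σ hσ k) y y')
  have h2 := aux_dist_map hconn _ (aux_adj_iter_symm σ hσ k) ((⇑σ)^[k] y) ((⇑σ)^[k] y')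
  have hli : ∀ a : Y, (⇑σ.symm)^[k] ((⇑σ)^[k] a) = a :=
    fun a => Function.LeftInverse.iterate σ.left_inv k a
  rwa [hli, hli] at h2

lemma aux_mid {Y : Type} {G : SimpleGraph Y} (hconn : G.Connected) :
    ∀ {w y : Y} (p : G.Walk w y) (d : ℕ), d ≤ p.length →
      ∃ m, G.dist w m ≤ d ∧ G.dist m y ≤ p.length - d := by
  intro w y p
  induction p with
  | @nil u =>
    intro d hd
    refine ⟨u, ?_, ?_⟩ <;> rw [SimpleGraph.dist_self] <;> omega
  | @cons a b y h q ih =>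
    intro d hd
    match d with
    | 0 => exact ⟨a, by simp, by simpa using SimpleGraph.dist_le (SimpleGraph.Walk.cons h q)⟩
    | d + 1 =>
      obtain ⟨m, h1, h2⟩ := ih d (by simpa using hd)
      refine ⟨m, ?_, ?_⟩
      · calc G.dist a m ≤ G.dist a b + G.dist b m := hconn.dist_triangle
          _ ≤ 1 + d := by
            have : G.dist a b = 1 := SimpleGraph.dist_eq_one_iff_adj.mpr h
            omega
          _ = d + 1 := by omega
      · simpa using h2

lemma aux_border_nonempty {Y : Type} {G : SimpleGraph Y} (hconn : G.Connected)
    (w ystar : Y) (d : ℕ) (hd : d ≤ G.dist w ystar) : ∃ m, G.dist w m = d := by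
  obtain ⟨p, hp⟩ := hconn.exists_walk_length_eq_dist w ystar
  obtain ⟨m, h1, h2⟩ := aux_mid hconn p d (by omega)
  refine ⟨m, le_antisymm h1 ?_⟩
  have htr := hconn.dist_triangle (u := w) (v := m) (w := ystar)
  omega

lemma aux_ecc_const {Y : Type} [Fintype Y] {G : SimpleGraph Y}
    (hconn : G.Connected) (σ : Y ≃ Y)
    (hσ : ∀ y y', G.Adj y y' ↔ G.Adj (σ y) (σ y'))
    (horbit : ∀ y y' : Y, ∃ k : ℕ, (⇑σ)^[k] y = y') (w w' : Y) :
    (univ.sup fun y => G.dist w y) = univ.sup fun y => G.dist w' y := by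
  obtain ⟨k, hk⟩ := horbit w w'
  subst hk
  apply le_antisymm
  · apply Finset.sup_le; intro y _
    rw [show G.dist w y = G.dist ((⇑σ)^[k] w) ((⇑σ)^[k] y) from
      (aux_dist_iter hconn σ hσ k w y).symm]
    exact Finset.le_sup (mem_univ _)
  · apply Finset.sup_le; intro y _
    have hy : y = (⇑σ)^[k] ((⇑σ.symm)^[k] y) :=
      (Function.LeftInverse.iterate σ.right_inv k y).symm
    rw [hy, aux_dist_iter hconn σ hσ k]
    exact Finset.le_sup (mem_univ _)

lemma aux_ecc_eq {Y : Type} [Fintype Y] [Nonempty Y] {G : SimpleGraph Y}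
    (hconn : G.Connected) (σ : Y ≃ Y)
    (hσ : ∀ y y', G.Adj y y' ↔ G.Adj (σ y) (σ y'))
    (horbit : ∀ y y' : Y, ∃ k : ℕ, (⇑σ)^[k] y = y')
    (n : ℕ) (hn : n = Finset.univ.sup fun p : Y × Y => G.dist p.1 p.2) (w : Y) :
    (univ.sup fun y => G.dist w y) = n := by
  have h1 : (Finset.univ : Finset (Y × Y)) = univ ×ˢ univ := Finset.univ_product_univ.symm
  rw [hn, h1, Finset.sup_product_left]
  have h2 : (fun w' : Y => univ.sup fun y => G.dist w' y)
      = fun _ : Y => univ.sup fun y => G.dist w y := by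
    funext w'
    exact aux_ecc_const hconn σ hσ horbit w' w
  rw [h2, Finset.sup_const univ_nonempty]

lemma aux_sum_dist {Y : Type} [Fintype Y] [Nonempty Y] [DecidableEq Y] {G : SimpleGraph Y}
    (hconn : G.Connected) (c n : ℕ)
    (hecc : ∀ w : Y, (univ.sup fun y => G.dist w y) = n)
    (hcard : ∀ (y : Y) (d : ℕ), 0 < d →
      (Finset.univ.filter fun y' => G.dist y y' = d).card = 0 ∨
        (Finset.univ.filter fun y' => G.dist y y' = d).card = c)
    (u : ℝ) (hu : 0 ≤ u) (w : Y) :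
    ∑ y, u ^ (G.dist w y) = 1 + c * ∑ d ∈ Icc 1 n, u ^ d := by
  have hmaps : ∀ y ∈ (univ : Finset Y), G.dist w y ∈ Finset.range (n + 1) := by
    intro y _
    rw [Finset.mem_range]
    have h : G.dist w y ≤ univ.sup fun y => G.dist w y := Finset.le_sup (Finset.mem_univ y)
    have := hecc w
    omega
  rw [← Finset.sum_fiberwise_of_maps_to hmaps (fun y => u ^ G.dist w y)]
  have hinner : ∀ d ∈ Finset.range (n+1),
      (∑ y ∈ univ.filter fun y => G.dist w y = d, u ^ G.dist w y)
        = ((univ.filter fun y => G.dist w y = d).card : ℝ) * u ^ d := by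
    intro d _
    rw [Finset.sum_congr rfl (fun y hy => by rw [(Finset.mem_filter.mp hy).2]),
      Finset.sum_const, nsmul_eq_mul]
  rw [Finset.sum_congr rfl hinner]
  have hsplit : Finset.range (n+1) = insert 0 (Finset.Icc 1 n) := by
    ext d; simp only [Finset.mem_range, Finset.mem_Icc, Finset.mem_insert]; omega
  rw [hsplit, Finset.sum_insert (by simp)]
  have h0 : (univ.filter fun y => G.dist w y = 0) = {w} := by
    ext y
    simp [hconn.dist_eq_zero_iff, eq_comm]
  rw [h0]
  simp only [Finset.card_singleton, Nat.cast_one, pow_zero, mul_one]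
  congr 1
  rw [Finset.mul_sum]
  apply Finset.sum_congr rfl
  intro d hd
  rw [Finset.mem_Icc] at hd
  have hne : (univ.filter fun y => G.dist w y = d).card = c := by
    rcases hcard w d (by omega) with h | h
    · exfalso
      obtain ⟨ystar, _, hys⟩ := Finset.exists_mem_eq_sup univ univ_nonempty
        (fun y => G.dist w y)
      have hdn : G.dist w ystar = n := by rw [← hys, hecc w]
      obtain ⟨m, hm⟩ := aux_border_nonempty hconn w ystar d (by omega)
      have hmem : m ∈ univ.filter fun y => G.dist w y = d := by simp [hm]
      have := Finset.card_pos.mpr ⟨m, hmem⟩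
      omega
    · exact h
  rw [hne]

lemma aux_alg (x : ℝ) (hx : 1 < x) (c : ℕ) (hc : 1 ≤ c) (n : ℕ)
    (α : ℝ)
    (hα : α = x ^ n * (1 - x) / (x ^ n * (1 - x) + c * (1 - x ^ n))) :
    α * (1 + c * ∑ d ∈ Icc 1 n, (x⁻¹) ^ d) = 1 := by
  have hx0 : (0:ℝ) < x := by linarith
  have hxne : x ≠ 0 := ne_of_gt hx0
  have hp1 : (1:ℝ) ≤ x ^ n := one_le_pow₀ hx.le
  have hpne : x ^ n ≠ 0 := by positivity
  have hune : x⁻¹ ≠ 1 := by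
    rw [ne_eq, inv_eq_one]; exact ne_of_gt hx
  have hune' : x⁻¹ - 1 ≠ 0 := sub_ne_zero.mpr hune
  have hD : x ^ n * (1 - x) + c * (1 - x ^ n) < 0 := by
    have h1 : x ^ n * (1 - x) < 0 := by nlinarith
    have h2 : (c:ℝ) * (1 - x ^ n) ≤ 0 := by
      have hc0 : (0:ℝ) ≤ c := Nat.cast_nonneg c
      nlinarith
    linarith
  have hDne : x ^ n * (1 - x) + c * (1 - x ^ n) ≠ 0 := ne_of_lt hD
  have hgeo : ∀ m : ℕ, x ^ m * ((∑ d ∈ Icc 1 m, x⁻¹ ^ d) * (x - 1)) = x ^ m - 1 := by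
    intro m
    induction m with
    | zero => simp
    | succ m ih =>
      rw [Finset.sum_Icc_succ_top (by omega)]
      have hxx : x ^ (m+1) * x⁻¹ ^ (m+1) = 1 := by
        rw [← mul_pow, mul_inv_cancel₀ hxne, one_pow]
      calc x ^ (m+1) * ((∑ d ∈ Icc 1 m, x⁻¹ ^ d + x⁻¹ ^ (m+1)) * (x-1))
          = x * (x ^ m * ((∑ d ∈ Icc 1 m, x⁻¹ ^ d) * (x-1)))
            + (x ^ (m+1) * x⁻¹ ^ (m+1)) * (x-1) := by ring
        _ = x * (x ^ m - 1) + 1 * (x - 1) := by rw [ih, hxx]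
        _ = x ^ (m+1) - 1 := by ring
  have hg := hgeo n
  rw [hα, div_mul_eq_mul_div, div_eq_one_iff_eq hDne]
  linear_combination (-(c:ℝ)) * hg

/-- **Theorem 6 (optimal randomization mechanism).** Under the regularity conditions
(connected graph `(Y, ∼)` with an automorphism with a single orbit, and
`|Border_d(y)| ∈ {0, c}` for all `y` and `d > 0`), the matrix
`M y z = α / e^{ε · dist(y,z)}` with `n` the diameter and
`α = e^{nε}(1-e^ε)/(e^{nε}(1-e^ε)+c(1-e^{nε}))` is a legal channel matrix, provides
`ε`-differential privacy (hence so does its composition with any query with answer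
set `Y`), and maximizes the uniform-prior utility: its utility equals `α` and every
`ε`-differentially private channel from `Y` has uniform-prior utility at most `α`. -/
theorem optimal_mechanism_construction
    (Y : Type) [Fintype Y] [Nonempty Y] [DecidableEq Y]
    (G : SimpleGraph Y) (hconn : G.Connected)
    (σ : Y ≃ Y) (hσ : ∀ y y', G.Adj y y' ↔ G.Adj (σ y) (σ y'))
    (horbit : ∀ y y' : Y, ∃ k : ℕ, (⇑σ)^[k] y = y')
    (ε : ℝ) (hε : 0 < ε)
    (c : ℕ) (hc : 1 ≤ c)
    (hborder : ∀ (y : Y) (d : ℕ), 0 < d →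
      (Finset.univ.filter fun y' => G.dist y y' = d).card = 0 ∨
        (Finset.univ.filter fun y' => G.dist y y' = d).card = c)
    (n : ℕ) (hn : n = Finset.univ.sup fun p : Y × Y => G.dist p.1 p.2)
    (α : ℝ)
    (hα : α = Real.exp (n * ε) * (1 - Real.exp ε) /
        (Real.exp (n * ε) * (1 - Real.exp ε) + c * (1 - Real.exp (n * ε))))
    (M : Y → Y → ℝ)
    (hM : ∀ y z, M y z = α / Real.exp (ε * G.dist y z)) :
    -- (1) M is a legal channel matrix
    ((∀ y z, 0 ≤ M y z) ∧ (∀ y, ∑ z, M y z = 1)) ∧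
    -- (2) M provides ε-differential privacy w.r.t. the adjacency of Y
    (∀ y y', G.Adj y y' → ∀ z, M y z ≤ Real.exp ε * M y' z) ∧
    -- (3) M maximizes the uniform-prior utility
    ((1 / (Fintype.card Y : ℝ)) * (∑ z, ⨆ y, M y z) = α ∧
      ∀ (Z : Type) [Fintype Z] (M' : Y → Z → ℝ),
        (∀ y z, 0 ≤ M' y z) → (∀ y, ∑ z, M' y z = 1) →
        (∀ y y', G.Adj y y' → ∀ z, M' y z ≤ Real.exp ε * M' y' z) →
        (1 / (Fintype.card Y : ℝ)) * (∑ z, ⨆ y, M' y z) ≤ α) := by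
  have hx1 : 1 < Real.exp ε := Real.one_lt_exp_iff.mpr hε
  set x := Real.exp ε with hxdef
  have hx0 : (0:ℝ) < x := Real.exp_pos ε
  have hxne : x ≠ 0 := ne_of_gt hx0
  have hu0 : (0:ℝ) < x⁻¹ := by positivity
  have hu1 : x⁻¹ < 1 := by
    have hxx : x * x⁻¹ = 1 := mul_inv_cancel₀ hxne
    nlinarith
  have hM2 : ∀ y z, M y z = α * x⁻¹ ^ (G.dist y z) := by
    intro y z
    rw [hM, show ε * (G.dist y z : ℝ) = (G.dist y z : ℝ) * ε from mul_comm _ _,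
      Real.exp_nat_mul, ← hxdef, div_eq_mul_inv, inv_pow]
  have hα2 : α = x ^ n * (1 - x) / (x ^ n * (1 - x) + c * (1 - x ^ n)) := by
    rw [hα, Real.exp_nat_mul, ← hxdef]
  have hecc : ∀ w : Y, (Finset.univ.sup fun y => G.dist w y) = n :=
    fun w => aux_ecc_eq hconn σ hσ horbit n hn w
  have hsum : ∀ w : Y, ∑ y, (x⁻¹) ^ (G.dist w y)
      = 1 + c * ∑ d ∈ Finset.Icc 1 n, (x⁻¹) ^ d :=
    fun w => aux_sum_dist hconn c n hecc hborder x⁻¹ hu0.le w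
  set S := 1 + (c:ℝ) * ∑ d ∈ Finset.Icc 1 n, (x⁻¹) ^ d with hSdef
  have hSpos : 0 < S := by
    have h1 : (0:ℝ) ≤ (c:ℝ) * ∑ d ∈ Finset.Icc 1 n, (x⁻¹) ^ d := by positivity
    rw [hSdef]; linarith
  have halg : α * S = 1 := aux_alg x hx1 c hc n α hα2
  have hαpos : 0 < α := by nlinarith
  have part1a : ∀ y z, 0 ≤ M y z := by
    intro y z; rw [hM2]; positivity
  have part1b : ∀ y, ∑ z, M y z = 1 := by
    intro y
    simp only [hM2]
    rw [← Finset.mul_sum, hsum y]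
    exact halg
  refine ⟨⟨part1a, part1b⟩, ?_, ?_, ?_⟩
  · -- (2)
    intro y y' hadj z
    rw [hM2, hM2]
    have hd : G.dist y' z ≤ G.dist y z + 1 := by
      have h1 := hconn.dist_triangle (u := y') (v := y) (w := z)
      have h2 : G.dist y' y = 1 := SimpleGraph.dist_eq_one_iff_adj.mpr (hadj.symm)
      omega
    have hpow : x⁻¹ ^ G.dist y z ≤ x * x⁻¹ ^ G.dist y' z := by
      rcases Nat.eq_zero_or_pos (G.dist y' z) with h | h
      · rw [h, pow_zero, mul_one]
        calc x⁻¹ ^ G.dist y z ≤ 1 := pow_le_one₀ hu0.le hu1.le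
          _ ≤ x := hx1.le
      · obtain ⟨b, hb⟩ : ∃ b, G.dist y' z = b + 1 := ⟨G.dist y' z - 1, by omega⟩
        rw [hb]
        have hble : b ≤ G.dist y z := by omega
        have h1 : x⁻¹ ^ G.dist y z ≤ x⁻¹ ^ b := pow_le_pow_of_le_one hu0.le hu1.le hble
        have h2 : x * x⁻¹ ^ (b+1) = x⁻¹ ^ b := by
          rw [pow_succ, mul_comm (x⁻¹ ^ b) x⁻¹, ← mul_assoc, mul_inv_cancel₀ hxne, one_mul]
        rw [h2]; exact h1
    calc α * x⁻¹ ^ G.dist y z ≤ α * (x * x⁻¹ ^ G.dist y' z) :=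
        mul_le_mul_of_nonneg_left hpow hαpos.le
      _ = x * (α * x⁻¹ ^ G.dist y' z) := by ring
  · -- (3a)
    have hsupM : ∀ z, (⨆ y, M y z) = α := by
      intro z
      apply le_antisymm
      · apply ciSup_le
        intro y
        rw [hM2]
        calc α * x⁻¹ ^ G.dist y z ≤ α * 1 :=
            mul_le_mul_of_nonneg_left (pow_le_one₀ hu0.le hu1.le) hαpos.le
          _ = α := mul_one α
      · have h := le_ciSup (f := fun y => M y z)
          (Set.Finite.bddAbove (Set.finite_range _)) z
        calc α = M z z := by rw [hM2, SimpleGraph.dist_self, pow_zero, mul_one]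
          _ ≤ _ := h
    rw [Finset.sum_congr rfl (fun z _ => hsupM z), Finset.sum_const,
      Finset.card_univ, nsmul_eq_mul]
    have hcard : (0:ℝ) < Fintype.card Y := by exact_mod_cast Fintype.card_pos
    field_simp
  · -- (3b)
    intro Z _ M' h0 h1 hdp
    have step : ∀ (a b : Y) (p : G.Walk a b) (z : Z),
        M' a z ≤ x ^ p.length * M' b z := by
      intro a b p z
      induction p with
      | @nil v => simp
      | @cons a b d h q ih =>
        calc M' a z ≤ x * M' b z := hdp a b h z
          _ ≤ x * (x ^ q.length * M' d z) := mul_le_mul_of_nonneg_left ih hx0.le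
          _ = x ^ (SimpleGraph.Walk.cons h q).length * M' d z := by
            rw [SimpleGraph.Walk.length_cons, pow_succ]; ring
    have chain : ∀ (a b : Y) (z : Z), M' a z ≤ x ^ (G.dist a b) * M' b z := by
      intro a b z
      obtain ⟨p, hp⟩ := hconn.exists_walk_length_eq_dist a b
      have h := step a b p z
      rwa [hp] at h
    have hWex : ∀ z : Z, ∃ w : Y, ∀ y, M' y z ≤ M' w z := fun z => Finite.exists_max _
    choose W hW using hWex
    have hsup' : ∀ z, (⨆ y, M' y z) = M' (W z) z := fun z =>
      le_antisymm (ciSup_le (hW z))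
        (le_ciSup (f := fun y => M' y z) (Set.Finite.bddAbove (Set.finite_range _)) (W z))
    have hkey : ∀ y : Y, ∑ z, x⁻¹ ^ (G.dist (W z) y) * M' (W z) z ≤ 1 := by
      intro y
      rw [← h1 y]
      apply Finset.sum_le_sum
      intro z _
      have hch := chain (W z) y z
      have h3 : x⁻¹ ^ G.dist (W z) y * M' (W z) z
          ≤ x⁻¹ ^ G.dist (W z) y * (x ^ G.dist (W z) y * M' y z) :=
        mul_le_mul_of_nonneg_left hch (by positivity)
      have h4 : x⁻¹ ^ G.dist (W z) y * (x ^ G.dist (W z) y * M' y z) = M' y z := by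
        rw [← mul_assoc, ← mul_pow, inv_mul_cancel₀ hxne, one_pow, one_mul]
      rw [h4] at h3
      exact h3
    have htot : S * (∑ z, M' (W z) z) ≤ (Fintype.card Y : ℝ) := by
      have h5 : ∑ y : Y, ∑ z, x⁻¹ ^ (G.dist (W z) y) * M' (W z) z
          ≤ ∑ _y : Y, (1:ℝ) := Finset.sum_le_sum fun y _ => hkey y
      rw [Finset.sum_const, Finset.card_univ, nsmul_eq_mul, mul_one] at h5
      rw [Finset.sum_comm] at h5
      have h6 : ∀ z : Z, ∑ y, x⁻¹ ^ (G.dist (W z) y) * M' (W z) z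
          = S * M' (W z) z := by
        intro z
        rw [← Finset.sum_mul, hsum (W z)]
      rw [Finset.sum_congr rfl (fun z _ => h6 z)] at h5
      rwa [← Finset.mul_sum] at h5
    rw [Finset.sum_congr rfl (fun z _ => hsup' z)]
    have hcard : (0:ℝ) < Fintype.card Y := by exact_mod_cast Fintype.card_pos
    have hTle : (∑ z, M' (W z) z) ≤ (Fintype.card Y : ℝ) * α := by
      have h7 := mul_le_mul_of_nonneg_left htot hαpos.le
      rw [← mul_assoc, halg, one_mul] at h7
      linarith
    calc (1 / (Fintype.card Y : ℝ)) * ∑ z, M' (W z) z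
        ≤ (1 / (Fintype.card Y : ℝ)) * ((Fintype.card Y : ℝ) * α) :=
          mul_le_mul_of_nonneg_left hTle (by positivity)
      _ = α := by field_simp
end

section
/- Let A be a nonempty finite set with a symmetric, irreflexive adjacency relation ∼, let B be a finite set with |A| ≤ |B|, let ε ≥ 0, and let M be a channel matrix from A to B such that M a b ≤ e^ε · M a' b for all b ∈ B and all adjacent a ∼ a'. Then there exists a square channel matrix M' from A to A such that: (1) M' a b ≤ e^ε · M' a' b for all b and all adjacent a ∼ a'; (2) M' i i = max_{h ∈ A} M' h i for every i ∈ A (the diagonal contains the column maxima); and (3) ∑_{j ∈ A} max_{i ∈ A} M' i j = ∑_{b ∈ B} max_{i ∈ A} M i b (the sum of column maxima, hence the uniform-prior conditional min-entropy, is preserved). -/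
open Finset

/-- **Lemma 1 (collapsing to a square matrix).** Given an `ε`-differentially private
channel matrix `M` from `A` to `B` with `|A| ≤ |B|` (w.r.t. a symmetric irreflexive
adjacency on `A`), there is a square channel matrix `M'` from `A` to `A` that still
provides `ε`-differential privacy, has the column maxima on the diagonal, and has the
same sum of column maxima (hence the same uniform-prior conditional min-entropy). -/
theorem collapse_to_square_matrix
    (A : Type) [Fintype A] [Nonempty A]
    (adj : A → A → Prop) (hsymm : Symmetric adj) (hirr : Irreflexive adj)
    (B : Type) [Fintype B]
    (hcard : Fintype.card A ≤ Fintype.card B)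
    (ε : ℝ) (hε : 0 ≤ ε)
    (M : A → B → ℝ)
    (hM0 : ∀ a b, 0 ≤ M a b)
    (hM1 : ∀ a, ∑ b, M a b = 1)
    (hDP : ∀ a a', adj a a' → ∀ b, M a b ≤ Real.exp ε * M a' b) :
    ∃ M' : A → A → ℝ,
      (∀ a b, 0 ≤ M' a b) ∧ (∀ a, ∑ b, M' a b = 1) ∧
      (∀ a a', adj a a' → ∀ b, M' a b ≤ Real.exp ε * M' a' b) ∧
      (∀ i : A, M' i i = ⨆ h : A, M' h i) ∧
      (∑ j : A, ⨆ i : A, M' i j) = (∑ b : B, ⨆ i : A, M i b) := by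
  classical
  -- for each column b, pick an argmax row
  have hargmax : ∀ b : B, ∃ a : A, ∀ a' : A, M a' b ≤ M a b := by
    intro b
    obtain ⟨a, _, ha⟩ := Finset.exists_max_image (univ : Finset A) (fun a => M a b)
      ⟨Classical.arbitrary A, mem_univ _⟩
    exact ⟨a, fun a' => ha a' (mem_univ _)⟩
  choose f hf using hargmax
  set M' : A → A → ℝ := fun a j => ∑ b ∈ univ.filter (fun b => f b = j), M a b with hM'
  have hnn : ∀ a b, 0 ≤ M' a b := fun a j =>
    Finset.sum_nonneg fun b _ => hM0 a b
  have hrow : ∀ a, ∑ j, M' a j = 1 := by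
    intro a
    rw [← hM1 a]
    exact Finset.sum_fiberwise univ f (fun b => M a b)
  have hcolmax : ∀ i j : A, M' i j ≤ M' j j := by
    intro i j
    apply Finset.sum_le_sum
    intro b hb
    simp only [mem_filter] at hb
    rw [← hb.2]
    exact hf b i
  have hbddM' : ∀ j : A, BddAbove (Set.range fun i => M' i j) := fun j =>
    (Set.finite_range _).bddAbove
  have hdiag : ∀ i : A, M' i i = ⨆ h : A, M' h i := by
    intro i
    apply le_antisymm
    · exact le_ciSup (hbddM' i) i
    · exact ciSup_le fun h => hcolmax h i
  refine ⟨M', hnn, hrow, ?_, hdiag, ?_⟩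
  · intro a a' h b
    rw [hM', Finset.mul_sum]
    exact Finset.sum_le_sum fun c _ => hDP a a' h c
  · have hsupM : ∀ b : B, (⨆ i : A, M i b) = M (f b) b := by
      intro b
      apply le_antisymm
      · exact ciSup_le fun i => hf b i
      · exact le_ciSup (f := fun i => M i b) ((Set.finite_range _).bddAbove) (f b)
    calc ∑ j : A, ⨆ i : A, M' i j
        = ∑ j : A, M' j j := by simp_rw [← hdiag]
      _ = ∑ j : A, ∑ b ∈ univ.filter (fun b => f b = j), M (f b) b := by
          apply Finset.sum_congr rfl
          intro j _
          apply Finset.sum_congr rfl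
          intro b hb
          simp only [mem_filter] at hb
          rw [hb.2]
      _ = ∑ b : B, M (f b) b := Finset.sum_fiberwise univ f (fun b => M (f b) b)
      _ = ∑ b : B, ⨆ i : A, M i b := by simp_rw [hsupM]
end

section
/- Let u ≥ 1, v ≥ 2 be naturals, X = (Fin u → Fin v) with the adjacency relation x ∼ x' iff x and x' differ in exactly one coordinate, and let ε ≥ 0. Let M be a square channel matrix from X to X such that M x z ≤ e^ε · M x' z for all z and all adjacent x ∼ x', and such that M i i = max_{h ∈ X} M h i for every i ∈ X. Then there exists a channel matrix M' from X to X such that: (1) M' x z ≤ e^ε · M' x' z for all z and all adjacent x ∼ x'; (2) M' i i = M' h h for all i, h ∈ X (all diagonal entries are equal); (3) M' i i = max_{h ∈ X} M' h i for every i ∈ X; and (4) ∑_{j ∈ X} max_{i} M' i j = ∑_{j ∈ X} max_{i} M i j. -/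
open Finset

/-- **Lemma 2 (equalizing the diagonal).** Let `X = (Fin u → Fin v)` with the
Hamming-distance-1 adjacency. If a square channel matrix `M` from `X` to `X` provides
`ε`-differential privacy and has the column maxima on the diagonal, then there is a
channel matrix `M'` providing `ε`-differential privacy, with all diagonal entries
equal, the column maxima on the diagonal, and the same sum of column maxima. -/
theorem equalize_diagonal
    (u v : ℕ) (hu : 1 ≤ u) (hv : 2 ≤ v)
    (ε : ℝ) (hε : 0 ≤ ε)
    (M : (Fin u → Fin v) → (Fin u → Fin v) → ℝ)
    (hM0 : ∀ x z, 0 ≤ M x z)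
    (hM1 : ∀ x, ∑ z, M x z = 1)
    (hDP : ∀ x x' : Fin u → Fin v, hammingDist x x' = 1 →
      ∀ z, M x z ≤ Real.exp ε * M x' z)
    (hdiag : ∀ i, M i i = ⨆ h, M h i) :
    ∃ M' : (Fin u → Fin v) → (Fin u → Fin v) → ℝ,
      (∀ x z, 0 ≤ M' x z) ∧ (∀ x, ∑ z, M' x z = 1) ∧
      (∀ x x' : Fin u → Fin v, hammingDist x x' = 1 →
        ∀ z, M' x z ≤ Real.exp ε * M' x' z) ∧
      (∀ i h, M' i i = M' h h) ∧
      (∀ i, M' i i = ⨆ h, M' h i) ∧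
      (∑ j, ⨆ i, M' i j) = (∑ j, ⨆ i, M i j) := by
  haveI : NeZero v := ⟨by omega⟩
  haveI : Nonempty (Fin v) := ⟨⟨0, by omega⟩⟩
  set c : ℝ := (Fintype.card (Fin u → Fin v) : ℝ) with hc
  have hcpos : 0 < c := by
    rw [hc]
    exact_mod_cast Fintype.card_pos (α := Fin u → Fin v)
  -- translation invariance of Hamming distance
  have hham : ∀ (x x' t : Fin u → Fin v),
      hammingDist (x + t) (x' + t) = hammingDist x x' := by
    intro x x' t
    unfold hammingDist
    congr 1
    ext i
    simp [Pi.add_apply]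
  set M' : (Fin u → Fin v) → (Fin u → Fin v) → ℝ :=
    fun x z => (∑ t, M (x + t) (z + t)) / c with hM'def
  have hM'0 : ∀ x z, 0 ≤ M' x z := by
    intro x z
    apply div_nonneg _ hcpos.le
    exact Finset.sum_nonneg fun t _ => hM0 _ _
  -- column max on diagonal for M (pointwise version)
  have hcolmax : ∀ h i, M h i ≤ M i i := by
    intro h i
    rw [hdiag i]
    exact le_ciSup (f := fun h => M h i) (Set.Finite.bddAbove (Set.finite_range _)) h
  have hrow : ∀ x, ∑ z, M' x z = 1 := by
    intro x
    have : ∀ t : Fin u → Fin v, ∑ z, M (x + t) (z + t) = 1 := by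
      intro t
      rw [← hM1 (x + t)]
      exact Fintype.sum_equiv (Equiv.addRight t) _ _ (fun z => rfl)
    simp only [hM'def]
    rw [← Finset.sum_div, Finset.sum_comm]
    rw [Finset.sum_congr rfl (fun t _ => this t)]
    simp only [Finset.sum_const, nsmul_eq_mul, mul_one, Finset.card_univ, ← hc]
    field_simp
  have hDP' : ∀ x x' : Fin u → Fin v, hammingDist x x' = 1 →
      ∀ z, M' x z ≤ Real.exp ε * M' x' z := by
    intro x x' hxx' z
    simp only [hM'def]
    rw [← mul_div_assoc]
    gcongr
    rw [Finset.mul_sum]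
    apply Finset.sum_le_sum
    intro t _
    apply hDP
    rw [hham]; exact hxx'
  have hdiagconst : ∀ i : Fin u → Fin v, M' i i = (∑ s, M s s) / c := by
    intro i
    simp only [hM'def]
    congr 1
    exact Fintype.sum_equiv (Equiv.addLeft i) _ _ (fun t => rfl)
  have hcolmax' : ∀ h i : Fin u → Fin v, M' h i ≤ M' i i := by
    intro h i
    simp only [hM'def]
    gcongr with t ht
    exact hcolmax _ _
  have hdiag' : ∀ i : Fin u → Fin v, M' i i = ⨆ h, M' h i := by
    intro i
    apply le_antisymm
    · exact le_ciSup (f := fun h => M' h i) (Set.Finite.bddAbove (Set.finite_range _)) i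
    · exact ciSup_le fun h => hcolmax' h i
  refine ⟨M', hM'0, hrow, hDP', ?_, hdiag', ?_⟩
  · intro i h; rw [hdiagconst, hdiagconst]
  · have h1 : ∀ j : Fin u → Fin v, (⨆ i, M' i j) = M' j j := fun j => (hdiag' j).symm
    have h2 : ∀ j : Fin u → Fin v, (⨆ i, M i j) = M j j := fun j => (hdiag j).symm
    rw [Finset.sum_congr rfl (fun j _ => h1 j), Finset.sum_congr rfl (fun j _ => h2 j)]
    rw [Finset.sum_congr rfl (fun j _ => hdiagconst j)]
    rw [← Finset.sum_div]
    rw [Finset.sum_const]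
    simp [hc]
    field_simp
end

section
/- Let Y be a nonempty finite set with a symmetric, irreflexive adjacency relation ∼ such that the graph (Y, ∼) admits an automorphism σ with a single orbit, and let ε ≥ 0. Let M be a square channel matrix from Y to Y such that M y z ≤ e^ε · M y' z for all z and all adjacent y ∼ y', and such that M i i = max_{h ∈ Y} M h i for every i ∈ Y. Then there exists a channel matrix M' from Y to Y such that: (1) M' y z ≤ e^ε · M' y' z for all z and all adjacent y ∼ y'; (2) all diagonal entries of M' are equal; (3) M' i i = max_{h ∈ Y} M' h i for every i; and (4) ∑_{j ∈ Y} max_{i} M' i j = ∑_{j ∈ Y} max_{i} M i j. -/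
open Finset

/-- **Lemma 3 (equalizing the diagonal via a single-orbit automorphism).** Let
`(Y, ∼)` be a graph (symmetric irreflexive adjacency, modelled as a `SimpleGraph`)
admitting an automorphism `σ` with a single orbit. If a square channel matrix `M`
from `Y` to `Y` provides `ε`-differential privacy and has the column maxima on the
diagonal, then there is a channel matrix `M'` providing `ε`-differential privacy,
with all diagonal entries equal, the column maxima on the diagonal, and the same sum
of column maxima. -/
theorem equalize_diagonal_single_orbit
    (Y : Type) [Fintype Y] [Nonempty Y]
    (G : SimpleGraph Y)
    (σ : Y ≃ Y) (hσ : ∀ y y', G.Adj y y' ↔ G.Adj (σ y) (σ y'))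
    (horbit : ∀ y y' : Y, ∃ k : ℕ, (⇑σ)^[k] y = y')
    (ε : ℝ) (hε : 0 ≤ ε)
    (M : Y → Y → ℝ)
    (hM0 : ∀ y z, 0 ≤ M y z)
    (hM1 : ∀ y, ∑ z, M y z = 1)
    (hDP : ∀ y y', G.Adj y y' → ∀ z, M y z ≤ Real.exp ε * M y' z)
    (hdiag : ∀ i, M i i = ⨆ h, M h i) :
    ∃ M' : Y → Y → ℝ,
      (∀ y z, 0 ≤ M' y z) ∧ (∀ y, ∑ z, M' y z = 1) ∧
      (∀ y y', G.Adj y y' → ∀ z, M' y z ≤ Real.exp ε * M' y' z) ∧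
      (∀ i h, M' i i = M' h h) ∧
      (∀ i, M' i i = ⨆ h, M' h i) ∧
      (∑ j, ⨆ i, M' i j) = (∑ j, ⨆ i, M i j) := by
  classical
  set N := orderOf σ with hNdef
  have hNpos : 0 < N := orderOf_pos σ
  have hNne : (N : ℝ) ≠ 0 := Nat.cast_ne_zero.mpr hNpos.ne'
  have hiter : ∀ k : ℕ, (⇑σ)^[k] = ⇑(σ ^ k) := fun k => Equiv.Perm.iterate_eq_pow σ k
  have hσN : ∀ y, (⇑σ)^[N] y = y := by
    intro y
    rw [hiter, pow_orderOf_eq_one]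
    rfl
  set M' : Y → Y → ℝ :=
    fun y z => (∑ k ∈ Finset.range N, M ((⇑σ)^[k] y) ((⇑σ)^[k] z)) / N with hM'def
  have hcolmax : ∀ y z, M y z ≤ M z z := by
    intro y z
    rw [hdiag z]
    exact le_ciSup (f := fun h => M h z) (Set.Finite.bddAbove (Set.finite_range _)) y
  have hM'0 : ∀ y z, 0 ≤ M' y z := by
    intro y z
    exact div_nonneg (Finset.sum_nonneg fun k _ => hM0 _ _) (Nat.cast_nonneg N)
  have hM'1 : ∀ y, ∑ z, M' y z = 1 := by
    intro y
    simp only [hM'def]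
    rw [← Finset.sum_div, Finset.sum_comm]
    have h : ∀ k ∈ Finset.range N, ∑ z, M ((⇑σ)^[k] y) ((⇑σ)^[k] z) = 1 := by
      intro k _
      rw [hiter]
      rw [Equiv.sum_comp (σ ^ k) (fun z => M (⇑(σ ^ k) y) z)]
      exact hM1 _
    rw [Finset.sum_congr rfl h, Finset.sum_const, Finset.card_range, nsmul_eq_mul, mul_one,
      div_self hNne]
  have hDP' : ∀ y y', G.Adj y y' → ∀ z, M' y z ≤ Real.exp ε * M' y' z := by
    intro y y' hadj z
    have hadjk : ∀ k, G.Adj ((⇑σ)^[k] y) ((⇑σ)^[k] y') := by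
      intro k
      induction k with
      | zero => exact hadj
      | succ k ih =>
        rw [Function.iterate_succ_apply', Function.iterate_succ_apply']
        exact (hσ _ _).mp ih
    simp only [hM'def]
    rw [← mul_div_assoc]
    gcongr
    rw [Finset.mul_sum]
    exact Finset.sum_le_sum fun k _ => hDP _ _ (hadjk k) _
  have hshift : ∀ y, M' (σ y) (σ y) = M' y y := by
    intro y
    simp only [hM'def]
    congr 1
    have h : ∀ k ∈ Finset.range N,
        M ((⇑σ)^[k] (σ y)) ((⇑σ)^[k] (σ y)) = M ((⇑σ)^[k + 1] y) ((⇑σ)^[k + 1] y) := by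
      intro k _
      rw [← Function.iterate_succ_apply]
    rw [Finset.sum_congr rfl h]
    have h1 := Finset.sum_range_succ' (fun k => M ((⇑σ)^[k] y) ((⇑σ)^[k] y)) N
    have h2 := Finset.sum_range_succ (fun k => M ((⇑σ)^[k] y) ((⇑σ)^[k] y)) N
    have h3 : M ((⇑σ)^[N] y) ((⇑σ)^[N] y) = M ((⇑σ)^[0] y) ((⇑σ)^[0] y) := by
      rw [hσN y]
      rfl
    have := h1.symm.trans h2
    rw [h3] at this
    linarith
  have horb : ∀ (k : ℕ) (y : Y), M' ((⇑σ)^[k] y) ((⇑σ)^[k] y) = M' y y := by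
    intro k
    induction k with
    | zero => intro y; rfl
    | succ k ih =>
      intro y
      rw [Function.iterate_succ_apply', hshift, ih]
  have hdiageq : ∀ i h, M' i i = M' h h := by
    intro i h
    obtain ⟨k, hk⟩ := horbit i h
    rw [← hk, horb]
  have hle : ∀ h i, M' h i ≤ M' i i := by
    intro h i
    simp only [hM'def]
    gcongr with k hk
    exact hcolmax _ _
  have hdiag' : ∀ i, M' i i = ⨆ h, M' h i := by
    intro i
    refine le_antisymm (le_ciSup (f := fun h => M' h i) (Set.Finite.bddAbove (Set.finite_range _)) i) ?_
    exact ciSup_le fun h => hle h i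
  have key : ∑ j, M' j j = ∑ j, M j j := by
    simp only [hM'def]
    rw [← Finset.sum_div, Finset.sum_comm]
    have h : ∀ k ∈ Finset.range N, ∑ j, M ((⇑σ)^[k] j) ((⇑σ)^[k] j) = ∑ j, M j j := by
      intro k _
      rw [hiter]
      exact Equiv.sum_comp (σ ^ k) (fun j => M j j)
    rw [Finset.sum_congr rfl h, Finset.sum_const, Finset.card_range, nsmul_eq_mul]
    field_simp
  refine ⟨M', hM'0, hM'1, hDP', hdiageq, hdiag', ?_⟩
  calc (∑ j, ⨆ i, M' i j) = ∑ j, M' j j := Finset.sum_congr rfl fun j _ => (hdiag' j).symm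
    _ = ∑ j, M j j := key
    _ = ∑ j, ⨆ i, M i j := Finset.sum_congr rfl fun j _ => hdiag j
end

section
/- Let u ≥ 1, v ≥ 2 be naturals, X = (Fin u → Fin v), ε ≥ 0, and let M : X → X → ℝ be a nonnegative matrix satisfying the column-adjacency ε-ratio condition M i j ≤ e^ε · M i j' for every row i and all columns j, j' ∈ X at Hamming distance 1. Then for every i ∈ X and every natural number d with 0 ≤ d < u: (u − d)·(v − 1) · ∑_{j : hammingDist(i,j) = d} M i j ≤ e^ε · (d + 1) · ∑_{j : hammingDist(i,j) = d+1} M i j. -/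
open Finset

section BorderSumAux

open Function

private lemma ham_card {u v : ℕ} (x y : Fin u → Fin v) :
    hammingDist x y = (univ.filter fun k => x k ≠ y k).card := rfl

private lemma ham_update {u v : ℕ} (i j : Fin u → Fin v) (k : Fin u) (a : Fin v) :
    hammingDist i (Function.update j k a) + (if i k = j k then 0 else 1)
      = hammingDist i j + (if i k = a then 0 else 1) := by
  rw [ham_card, ham_card, Finset.card_filter, Finset.card_filter,
    ← Finset.add_sum_erase _ _ (mem_univ k), ← Finset.add_sum_erase _ _ (mem_univ k)]
  have h2 : (univ.erase k).sum (fun x => if i x ≠ Function.update j k a x then (1:ℕ) else 0)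
      = (univ.erase k).sum (fun x => if i x ≠ j x then (1:ℕ) else 0) := by
    refine Finset.sum_congr rfl fun x hx => ?_
    rw [Function.update_of_ne (Finset.ne_of_mem_erase hx)]
  rw [h2, Function.update_self]
  by_cases h3 : i k = a <;> by_cases h4 : i k = j k <;> simp [h3, h4] <;> omega

private lemma ham_one {u v : ℕ} {j j' : Fin u → Fin v} (h : hammingDist j j' = 1) :
    ∃ k, j k ≠ j' k ∧ ∀ x, x ≠ k → j x = j' x := by
  rw [ham_card, Finset.card_eq_one] at h
  obtain ⟨k, hk⟩ := h
  refine ⟨k, ?_, fun x hx => ?_⟩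
  · have : k ∈ univ.filter fun x => j x ≠ j' x := hk ▸ mem_singleton_self k
    simpa using this
  · by_contra hne
    have : x ∈ univ.filter fun x => j x ≠ j' x := by simpa using hne
    rw [hk, mem_singleton] at this; exact hx this

private lemma count1 {u v : ℕ} (hv : 2 ≤ v) (i j : Fin u → Fin v) (d : ℕ)
    (hj : hammingDist i j = d) :
    (univ.filter fun j' => hammingDist i j' = d + 1 ∧ hammingDist j j' = 1).card
      = (u - d) * (v - 1) := by
  classical
  have hcardA : (univ.filter fun k => i k = j k).card = u - d := by
    have h0 := Finset.card_filter_add_card_filter_not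
      (s := (univ : Finset (Fin u))) (p := fun k => i k = j k)
    rw [ham_card] at hj
    simp only [Finset.card_univ, Fintype.card_fin] at h0
    have : (univ.filter fun k => ¬ i k = j k).card = d := hj
    omega
  have hS : ((univ.filter fun k => i k = j k).sigma
      fun k => univ.filter fun a => a ≠ i k).card = (u - d) * (v - 1) := by
    rw [Finset.card_sigma]
    have h5 : ∀ k ∈ univ.filter fun k => i k = j k,
        (univ.filter fun a => a ≠ i k).card = v - 1 := by
      intro k _
      rw [Finset.filter_ne', Finset.card_erase_of_mem (mem_univ _), Finset.card_univ,
        Fintype.card_fin]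
    rw [Finset.sum_congr rfl h5, Finset.sum_const, hcardA, smul_eq_mul]
  rw [← hS]
  refine (Finset.card_bij (fun p _ => Function.update j p.1 p.2) ?_ ?_ ?_).symm
  · rintro ⟨k, a⟩ hp
    simp only [Finset.mem_sigma, Finset.mem_filter, Finset.mem_univ, true_and] at hp
    obtain ⟨hik, ha⟩ := hp
    have h3 : ¬ i k = a := fun h => ha h.symm
    have h4 : ¬ j k = a := fun h => ha (h.symm.trans hik.symm)
    have h1 := ham_update i j k a
    have h2 := ham_update j j k a
    rw [hammingDist_self, if_pos rfl, if_neg h4] at h2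
    rw [hj, if_pos hik, if_neg h3] at h1
    simp only [Finset.mem_filter, Finset.mem_univ, true_and]
    exact ⟨by omega, by omega⟩
  · rintro ⟨k, a⟩ hp ⟨k', a'⟩ hp' heq
    simp only [Finset.mem_sigma, Finset.mem_filter, Finset.mem_univ, true_and] at hp hp'
    have heq' : Function.update j k a = Function.update j k' a' := heq
    by_cases hkk : k = k'
    · subst hkk
      have : a = a' := by
        have := congrFun heq' k
        simpa using this
      simp [this]
    · exfalso
      have h6 := congrFun heq' k
      rw [Function.update_self, Function.update_of_ne hkk] at h6
      exact hp.2 (h6.trans hp.1.symm)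
  · intro j' hmem
    simp only [Finset.mem_filter, Finset.mem_univ, true_and] at hmem
    obtain ⟨hd1, hdist⟩ := hmem
    obtain ⟨k, hk, hoff⟩ := ham_one hdist
    have hupd : j' = Function.update j k (j' k) := by
      funext x
      by_cases hx : x = k
      · subst hx; simp
      · rw [Function.update_of_ne hx, hoff x hx]
    have h1 := ham_update i j k (j' k)
    rw [← hupd, hd1, hj] at h1
    have hik : i k = j k := by
      by_contra h3
      rw [if_neg h3] at h1
      split_ifs at h1 <;> omega
    have hik' : ¬ i k = j' k := by
      by_contra h4
      rw [if_pos hik, if_pos h4] at h1; omega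
    refine ⟨⟨k, j' k⟩, ?_, hupd.symm⟩
    simp only [Finset.mem_sigma, Finset.mem_filter, Finset.mem_univ, true_and]
    exact ⟨hik, fun h => hik' h.symm⟩
private lemma count2 {u v : ℕ} (i j' : Fin u → Fin v) (d : ℕ)
    (hj' : hammingDist i j' = d + 1) :
    (univ.filter fun j => hammingDist i j = d ∧ hammingDist j j' = 1).card = d + 1 := by
  classical
  have hcardD : (univ.filter fun k => i k ≠ j' k).card = d + 1 := hj' 
  rw [← hcardD]
  refine (Finset.card_bij (fun k _ => Function.update j' k (i k)) ?_ ?_ ?_).symm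
  · intro k hk
    simp only [Finset.mem_filter, Finset.mem_univ, true_and] at hk ⊢
    have h1 := ham_update i j' k (i k)
    rw [hj', if_neg hk, if_pos rfl] at h1
    have h2 := ham_update j' j' k (i k)
    have hk2 : ¬ j' k = i k := fun h => hk h.symm
    rw [hammingDist_self, if_pos rfl, if_neg hk2] at h2
    exact ⟨by omega, by rw [hammingDist_comm]; omega⟩
  · intro k hk k' hk' heq
    simp only [Finset.mem_filter, Finset.mem_univ, true_and] at hk hk'
    have heq' : Function.update j' k (i k) = Function.update j' k' (i k') := heq
    by_contra hkk
    have h6 := congrFun heq' k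
    rw [Function.update_self, Function.update_of_ne hkk] at h6
    exact hk h6
  · intro j hmem
    simp only [Finset.mem_filter, Finset.mem_univ, true_and] at hmem
    obtain ⟨hdj, hdist⟩ := hmem
    have hdist' : hammingDist j' j = 1 := by rw [hammingDist_comm]; exact hdist
    obtain ⟨k, hk, hoff⟩ := ham_one hdist'
    have hupd : j = Function.update j' k (j k) := by
      funext x
      by_cases hx : x = k
      · subst hx; simp
      · rw [Function.update_of_ne hx, ← hoff x hx]
    have h1 := ham_update i j' k (j k)
    rw [← hupd, hdj, hj'] at h1
    have e1 : ¬ i k = j' k := by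
      by_contra h3
      rw [if_pos h3] at h1
      split_ifs at h1 <;> omega
    have e2 : i k = j k := by
      by_contra h4
      rw [if_neg e1, if_neg h4] at h1; omega
    refine ⟨k, by simpa using e1, by rw [← e2] at hupd; exact hupd.symm⟩

end BorderSumAux

/-- **Counting inequality (equation (1) in Lemma 2).** If the rows of a nonnegative
matrix `M` on `X = (Fin u → Fin v)` satisfy the column-adjacency `ε`-ratio condition,
then for every row `i` and every `d < u`,
`(u - d)(v - 1) ∑_{dist(i,j)=d} M i j ≤ e^ε (d + 1) ∑_{dist(i,j)=d+1} M i j`. -/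
theorem border_sum_inequality
    (u v : ℕ) (hu : 1 ≤ u) (hv : 2 ≤ v)
    (ε : ℝ) (hε : 0 ≤ ε)
    (M : (Fin u → Fin v) → (Fin u → Fin v) → ℝ)
    (hM0 : ∀ i j, 0 ≤ M i j)
    (hcol : ∀ i j j' : Fin u → Fin v, hammingDist j j' = 1 →
      M i j ≤ Real.exp ε * M i j')
    (i : Fin u → Fin v) (d : ℕ) (hd : d < u) :
    ((u : ℝ) - d) * ((v : ℝ) - 1) *
        ∑ j ∈ Finset.univ.filter (fun j => hammingDist i j = d), M i j
      ≤ Real.exp ε * ((d : ℝ) + 1) *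
        ∑ j ∈ Finset.univ.filter (fun j => hammingDist i j = d + 1), M i j := by
  classical
  set s := Finset.univ.filter (fun j => hammingDist i j = d) with hs
  set t := Finset.univ.filter (fun j => hammingDist i j = d + 1) with ht
  have hcast : (((u - d) * (v - 1) : ℕ) : ℝ) = ((u : ℝ) - d) * ((v : ℝ) - 1) := by
    push_cast [Nat.cast_sub hd.le, Nat.cast_sub (by omega : 1 ≤ v)]
    ring
  have step1 : ((u : ℝ) - d) * ((v : ℝ) - 1) * ∑ j ∈ s, M i j
      = ∑ j ∈ s, ∑ j' ∈ t.filter (fun j' => hammingDist j j' = 1), M i j := by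
    rw [Finset.mul_sum]
    refine Finset.sum_congr rfl fun j hj => ?_
    rw [Finset.sum_const]
    have hjd : hammingDist i j = d := by
      simp only [hs, Finset.mem_filter] at hj; exact hj.2
    have : t.filter (fun j' => hammingDist j j' = 1)
        = Finset.univ.filter fun j' => hammingDist i j' = d + 1 ∧ hammingDist j j' = 1 := by
      rw [ht, Finset.filter_filter]
    rw [this, count1 hv i j d hjd, nsmul_eq_mul, hcast]
  have step2 : ∀ j' ∈ t, ∑ j ∈ s.filter (fun j => hammingDist j j' = 1), M i j'
      = ((d : ℝ) + 1) * M i j' := by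
    intro j' hj'
    rw [Finset.sum_const]
    have hjd : hammingDist i j' = d + 1 := by
      simp only [ht, Finset.mem_filter] at hj'; exact hj'.2
    have : s.filter (fun j => hammingDist j j' = 1)
        = Finset.univ.filter fun j => hammingDist i j = d ∧ hammingDist j j' = 1 := by
      rw [hs, Finset.filter_filter]
    rw [this, count2 i j' d hjd, nsmul_eq_mul]
    push_cast; ring
  rw [step1]
  calc ∑ j ∈ s, ∑ j' ∈ t.filter (fun j' => hammingDist j j' = 1), M i j
      ≤ ∑ j ∈ s, ∑ j' ∈ t.filter (fun j' => hammingDist j j' = 1), Real.exp ε * M i j' := by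
        refine Finset.sum_le_sum fun j _ => Finset.sum_le_sum fun j' hj' => ?_
        have : hammingDist j j' = 1 := (Finset.mem_filter.mp hj').2
        exact hcol i j j' this
    _ = Real.exp ε * ∑ j ∈ s, ∑ j' ∈ t, if hammingDist j j' = 1 then M i j' else 0 := by
        rw [Finset.mul_sum]
        refine Finset.sum_congr rfl fun j _ => ?_
        rw [← Finset.mul_sum, Finset.sum_filter]
    _ = Real.exp ε * ∑ j' ∈ t, ∑ j ∈ s, if hammingDist j j' = 1 then M i j' else 0 := by
        rw [Finset.sum_comm]
    _ = Real.exp ε * ∑ j' ∈ t, ((d : ℝ) + 1) * M i j' := by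
        congr 1
        refine Finset.sum_congr rfl fun j' hj' => ?_
        rw [← Finset.sum_filter, step2 j' hj']
    _ = Real.exp ε * ((d : ℝ) + 1) * ∑ j ∈ t, M i j := by
        rw [← Finset.mul_sum, mul_assoc]
end
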